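/- arXiv:1810.00601 — 10 statements merged into one kernel-verified Lean document; each statement's English description precedes it below -/
import Mathlib

section
/- Consider the control system ẋ = f(x) + g(x)u on ℝⁿ, with f : ℝⁿ → ℝⁿ, input matrix g : ℝⁿ → ℝ^{n×m} (m < n) of full column rank at every x, and a full-rank left annihilator g⊥ : ℝⁿ → ℝ^{(n−m)×n}, i.e. g⊥(x)g(x) = 0 with g⊥(x) of rank n−m for every x. Suppose there exist p < n and smooth mappings α : ℝᵖ → ℝᵖ, π : ℝᵖ → ℝⁿ, φ : ℝⁿ → ℝ^{n−p}, v : ℝⁿ × ℝ^{n−p} → ℝᵐ such that: (A1) the target dynamics ξ̇ = α(ξ) has a nonconstant T-periodic solution ξ⋆ (ξ⋆(t) = ξ⋆(t+T) for all t ≥ 0); (A2) for all ξ ∈ ℝᵖ, g⊥(π(ξ))[f(π(ξ)) − Dπ(ξ)α(ξ)] = 0, where Dπ(ξ) is the Jacobian of π; (A3) the set identity {x ∈ ℝⁿ : φ(x) = 0} = {x ∈ ℝⁿ : x = π(ξ) for some ξ ∈ ℝᵖ} =: 𝓜 holds; (A4) every solution (z(t), x(t)) of the augmented system ż = Dφ(x)[f(x)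 + g(x)v(x,z)], ẋ = f(x) + g(x)v(x,z) with initial condition z(0) = φ(x(0)) is bounded and satisfies z(t) → 0 as t → ∞, and v satisfies the boundary constraint v(π(ξ), 0) = c(π(ξ)) for all ξ, where c(π(ξ)) := [g(π(ξ))ᵀg(π(ξ))]⁻¹ g(π(ξ))ᵀ [Dπ(ξ)α(ξ) − f(π(ξ))]. Then the function x⋆(t) := π(ξ⋆(t)) is a T-periodic solution of the closed-loop system ẋ = f(x) + g(x)v(x, φ(x)), the set 𝓜 is invariant for the closed-loop system, and every solution x(t) of the closed-loop system is bounded and satisfies φ(x(t)) → 0 as t → ∞, hence dist(x(t), 𝓜) → 0. -/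
open Matrix Filter

private 
lemma LA0 {n m : ℕ} (A : Matrix (Fin n) (Fin m) ℝ) (B : Matrix (Fin (n-m)) (Fin n) ℝ)
    (hmn : m ≤ n) (hA : A.rank = m) (hB : B.rank = n - m) (hBA : B * A = 0)
    (w : Fin n → ℝ) (hw : B *ᵥ w = 0) :
    A *ᵥ ((Aᵀ * A)⁻¹ *ᵥ (Aᵀ *ᵥ w)) = w := by
  have hkerA : LinearMap.ker A.mulVecLin = ⊥ := by
    have h1 := LinearMap.finrank_range_add_finrank_ker A.mulVecLin
    rw [Module.finrank_fin_fun] at h1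
    have : Module.finrank ℝ (LinearMap.ker A.mulVecLin) = 0 := by
      have : Matrix.rank A = Module.finrank ℝ (LinearMap.range A.mulVecLin) := rfl
      omega
    exact Submodule.finrank_eq_zero.mp this
  have hAtA : IsUnit (Aᵀ * A) := by
    rw [← Matrix.mulVec_injective_iff_isUnit]
    have : LinearMap.ker (Aᵀ * A).mulVecLin = ⊥ := by
      rw [Matrix.ker_mulVecLin_transpose_mul_self]; exact hkerA
    intro u1 u2 h
    have := LinearMap.ker_eq_bot.mp this
    exact this h
  -- range A = ker B
  have hle : LinearMap.range A.mulVecLin ≤ LinearMap.ker B.mulVecLin := by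
    rintro _ ⟨u, rfl⟩
    simp only [LinearMap.mem_ker, Matrix.mulVecLin_apply, Matrix.mulVec_mulVec, hBA,
      Matrix.zero_mulVec]
  have hrange : LinearMap.range A.mulVecLin = LinearMap.ker B.mulVecLin := by
    apply Submodule.eq_of_le_of_finrank_eq hle
    have h2 := LinearMap.finrank_range_add_finrank_ker B.mulVecLin
    rw [Module.finrank_fin_fun] at h2
    have hbr : Matrix.rank B = Module.finrank ℝ (LinearMap.range B.mulVecLin) := rfl
    have har : Matrix.rank A = Module.finrank ℝ (LinearMap.range A.mulVecLin) := rfl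
    omega
  have hwmem : w ∈ LinearMap.range A.mulVecLin := by
    rw [hrange]; exact hw
  obtain ⟨u, hu⟩ := hwmem
  rw [Matrix.mulVecLin_apply] at hu
  subst hu
  simp only [Matrix.mulVec_mulVec]
  rw [Matrix.nonsing_inv_mul _ ((Matrix.isUnit_iff_isUnit_det _).mp hAtA), Matrix.mul_one]

private 
lemma smoothX {n m np : ℕ} (f : (Fin n → ℝ) → Fin n → ℝ)
    (g : (Fin n → ℝ) → Matrix (Fin n) (Fin m) ℝ)
    (φ : (Fin n → ℝ) → Fin np → ℝ)
    (v : (Fin n → ℝ) → (Fin np → ℝ) → Fin m → ℝ)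
    (hf : ContDiff ℝ (⊤ : ℕ∞) f) (hg : ∀ i j, ContDiff ℝ (⊤ : ℕ∞) fun x => g x i j)
    (hφ : ContDiff ℝ (⊤ : ℕ∞) φ)
    (hv : ContDiff ℝ (⊤ : ℕ∞) (fun q : (Fin n → ℝ) × (Fin np → ℝ) => v q.1 q.2)) :
    ContDiff ℝ (⊤ : ℕ∞) (fun x => f x + g x *ᵥ v x (φ x)) := by
  apply hf.add
  have hvx : ContDiff ℝ (⊤ : ℕ∞) (fun x => v x (φ x)) := hv.comp (contDiff_id.prodMk hφ)
  rw [contDiff_pi]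
  intro i
  have h : (fun x => (g x *ᵥ v x (φ x)) i) = fun x => ∑ j, g x i j * v x (φ x) j := by
    ext x; simp [Matrix.mulVec, dotProduct]
  rw [h]
  exact ContDiff.sum fun j _ => (hg i j).mul ((contDiff_pi.mp hvx) j)


/-- Proposition 1, orbital stabilization via I&I: for the control
system `ẋ = f(x) + g(x) u` on `ℝⁿ` with `g` of full column rank, `g⊥` a
full-rank left annihilator of `g`, and smooth mappings `α, π, φ, v` satisfying:
(A1) the target dynamics `ξ̇ = α(ξ)` has a nonconstant `T`-periodic solution
`ξ⋆`; (A2) the projected FBI equation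
`g⊥(π ξ)[f(π ξ) - Dπ(ξ) α(ξ)] = 0` holds for all `ξ`; (A3) the implicit
manifold identity `{x | φ x = 0} = range π =: 𝓜` holds; (A4) every solution of
the augmented system `ż = Dφ(x)[f(x) + g(x) v(x,z)]`,
`ẋ = f(x) + g(x) v(x,z)` with `z 0 = φ (x 0)` is bounded and satisfies
`z t → 0`, and `v (π ξ) 0 = c (π ξ)` with
`c (π ξ) = (g(π ξ)ᵀ g(π ξ))⁻¹ g(π ξ)ᵀ (Dπ(ξ) α(ξ) - f(π ξ))`.
Then `x⋆ := π ∘ ξ⋆` is a `T`-periodic solution of the closed-loop system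
`ẋ = f(x) + g(x) v(x, φ x)`, the set `𝓜` is invariant for the closed-loop
system, and every closed-loop solution is bounded with `φ (x t) → 0` and hence
`dist (x t, 𝓜) → 0`. -/
theorem stmt0 (n m p : ℕ) (hmn : m < n) (hpn : p < n)
    (f : (Fin n → ℝ) → (Fin n → ℝ))
    (g : (Fin n → ℝ) → Matrix (Fin n) (Fin m) ℝ)
    (gperp : (Fin n → ℝ) → Matrix (Fin (n - m)) (Fin n) ℝ)
    (hf : ContDiff ℝ (⊤ : ℕ∞) f)
    (hg : ∀ i j, ContDiff ℝ (⊤ : ℕ∞) (fun x => g x i j))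
    (hgrank : ∀ x, (g x).rank = m)
    (hgperprank : ∀ x, (gperp x).rank = n - m)
    (hannih : ∀ x, gperp x * g x = 0)
    -- the mappings of Proposition 1
    (α : (Fin p → ℝ) → (Fin p → ℝ))
    (π : (Fin p → ℝ) → (Fin n → ℝ))
    (φ : (Fin n → ℝ) → (Fin (n - p) → ℝ))
    (v : (Fin n → ℝ) → (Fin (n - p) → ℝ) → (Fin m → ℝ))
    (hα : ContDiff ℝ (⊤ : ℕ∞) α) (hπ : ContDiff ℝ (⊤ : ℕ∞) π) (hφ : ContDiff ℝ (⊤ : ℕ∞) φ)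
    (hv : ContDiff ℝ (⊤ : ℕ∞) (fun q : (Fin n → ℝ) × (Fin (n - p) → ℝ) => v q.1 q.2))
    -- (A1) target oscillator: a nonconstant T-periodic solution of ξ̇ = α(ξ)
    (T : ℝ) (hT : 0 < T) (ξstar : ℝ → Fin p → ℝ)
    (hξsol : ∀ t : ℝ, HasDerivAt ξstar (α (ξstar t)) t)
    (hξper : ∀ t : ℝ, 0 ≤ t → ξstar (t + T) = ξstar t)
    (hξnonconst : ∃ t s : ℝ, ξstar t ≠ ξstar s)
    -- (A2) immersion condition (projected FBI equation)
    (hFBI : ∀ ξ : Fin p → ℝ,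
      gperp (π ξ) *ᵥ (f (π ξ) - (fderiv ℝ π ξ) (α ξ)) = 0)
    -- (A3) implicit manifold
    (hman : {x : Fin n → ℝ | φ x = 0} = Set.range π)
    -- the control c rendering the manifold invariant
    (c : (Fin p → ℝ) → (Fin m → ℝ))
    (hc : ∀ ξ : Fin p → ℝ,
      c ξ = ((g (π ξ))ᵀ * g (π ξ))⁻¹ *ᵥ
        ((g (π ξ))ᵀ *ᵥ ((fderiv ℝ π ξ) (α ξ) - f (π ξ))))
    -- (A4) boundary constraint on v ...
    (hvc : ∀ ξ : Fin p → ℝ, v (π ξ) 0 = c ξ)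
    -- ... and attractivity/boundedness of the augmented dynamics
    (hA4 : ∀ z : ℝ → Fin (n - p) → ℝ, ∀ x : ℝ → Fin n → ℝ,
      z 0 = φ (x 0) →
      (∀ t : ℝ, 0 ≤ t →
        HasDerivAt x (f (x t) + g (x t) *ᵥ v (x t) (z t)) t) →
      (∀ t : ℝ, 0 ≤ t →
        HasDerivAt z
          ((fderiv ℝ φ (x t)) (f (x t) + g (x t) *ᵥ v (x t) (z t))) t) →
      (∃ M : ℝ, ∀ t : ℝ, 0 ≤ t → ‖x t‖ ≤ M ∧ ‖z t‖ ≤ M) ∧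
        Tendsto z atTop (nhds 0)) :
    -- conclusion 1: x⋆ = π ∘ ξ⋆ is a T-periodic solution of the closed loop
    ((∀ t : ℝ, HasDerivAt (fun s => π (ξstar s))
        (f (π (ξstar t)) + g (π (ξstar t)) *ᵥ v (π (ξstar t)) (φ (π (ξstar t)))) t) ∧
      (∀ t : ℝ, 0 ≤ t → π (ξstar (t + T)) = π (ξstar t))) ∧
    -- conclusion 2: the manifold 𝓜 = range π is invariant for the closed loop
    (∀ x : ℝ → Fin n → ℝ,
      (∀ t : ℝ, 0 ≤ t →
        HasDerivAt x (f (x t) + g (x t) *ᵥ v (x t) (φ (x t))) t) →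
      x 0 ∈ Set.range π → ∀ t : ℝ, 0 ≤ t → x t ∈ Set.range π) ∧
    -- conclusion 3: every closed-loop solution is bounded, φ(x t) → 0 and
    -- dist (x t, 𝓜) → 0
    (∀ x : ℝ → Fin n → ℝ,
      (∀ t : ℝ, 0 ≤ t →
        HasDerivAt x (f (x t) + g (x t) *ᵥ v (x t) (φ (x t))) t) →
      (∃ M : ℝ, ∀ t : ℝ, 0 ≤ t → ‖x t‖ ≤ M) ∧
        Tendsto (fun t => φ (x t)) atTop (nhds 0) ∧
        Tendsto (fun t => Metric.infDist (x t) (Set.range π)) atTop (nhds 0)) := by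
  -- closed-loop vector field
  set X : (Fin n → ℝ) → (Fin n → ℝ) := fun x => f x + g x *ᵥ v x (φ x) with hX
  have hXsmooth : ContDiff ℝ (⊤ : ℕ∞) X := smoothX f g φ v hf hg hφ hv
  -- φ vanishes on the manifold
  have hφπ : ∀ ξ : Fin p → ℝ, φ (π ξ) = 0 := by
    intro ξ
    have : π ξ ∈ Set.range π := ⟨ξ, rfl⟩
    rw [← hman] at this
    exact this
  -- the key identity: on the manifold the closed-loop field is Dπ α
  have key : ∀ ξ : Fin p → ℝ, X (π ξ) = (fderiv ℝ π ξ) (α ξ) := by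
    intro ξ
    have hw : gperp (π ξ) *ᵥ ((fderiv ℝ π ξ) (α ξ) - f (π ξ)) = 0 := by
      have h1 := hFBI ξ
      have h2 : (fderiv ℝ π ξ) (α ξ) - f (π ξ) = -(f (π ξ) - (fderiv ℝ π ξ) (α ξ)) := by
        abel
      rw [h2, Matrix.mulVec_neg, h1, neg_zero]
    have hla := LA0 (g (π ξ)) (gperp (π ξ)) hmn.le (hgrank (π ξ)) (hgperprank (π ξ))
      (hannih (π ξ)) _ hw
    rw [hX]
    simp only [hφπ ξ, hvc ξ, hc ξ, hla]
    abel
  have hπd : ∀ ξ₀ : Fin p → ℝ, DifferentiableAt ℝ π ξ₀ :=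
    fun ξ₀ => (hπ.differentiable (by simp)).differentiableAt
  -- any solution of the target dynamics gives a closed-loop solution on the manifold
  have sol_of_target : ∀ (ξ : ℝ → Fin p → ℝ) (t : ℝ), HasDerivAt ξ (α (ξ t)) t →
      HasDerivAt (fun s => π (ξ s)) (X (π (ξ t))) t := by
    intro ξ t hξ
    have := (hπd (ξ t)).hasFDerivAt.comp_hasDerivAt t hξ
    rw [key (ξ t)]
    exact this
  constructor
  · exact ⟨fun t => sol_of_target ξstar t (hξsol t), fun t ht => congrArg π (hξper t ht)⟩
  constructor
  · -- invariance
    intro x hx hx0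
    have hxc : ∀ t : ℝ, 0 ≤ t → ContinuousAt x t := fun t ht => (hx t ht).continuousAt
    rw [← hman] at hx0
    suffices h : ∀ b : ℝ, 0 ≤ b → φ (x b) = 0 by
      intro t ht
      rw [← hman]
      exact h t ht
    intro b hb
    set S : Set ℝ := {t | t ∈ Set.Icc 0 b ∧ ∀ s ∈ Set.Icc 0 t, φ (x s) = 0} with hSdef
    have h0S : (0:ℝ) ∈ S := by
      refine ⟨⟨le_refl 0, hb⟩, fun s hs => ?_⟩
      have : s = 0 := le_antisymm hs.2 hs.1
      rw [this]; exact hx0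
    have hbdd : BddAbove S := ⟨b, fun t ht => ht.1.2⟩
    set τ := sSup S with hτdef
    have hτ0le : 0 ≤ τ := le_csSup hbdd h0S
    have hτb : τ ≤ b := csSup_le ⟨0, h0S⟩ (fun t ht => ht.1.2)
    have hlt : ∀ s : ℝ, 0 ≤ s → s < τ → φ (x s) = 0 := by
      intro s hs0 hsτ
      obtain ⟨t, htS, hst⟩ := exists_lt_of_lt_csSup ⟨0, h0S⟩ hsτ
      exact htS.2 s ⟨hs0, hst.le⟩
    have hτ0 : φ (x τ) = 0 := by
      rcases eq_or_lt_of_le hτ0le with h | h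
      · rw [← h]; exact hx0
      · have hct : Filter.Tendsto (fun s => φ (x s)) (nhdsWithin τ (Set.Iio τ))
            (nhds (φ (x τ))) :=
          ((hφ.continuous.continuousAt).comp (hxc τ hτ0le)).tendsto.mono_left nhdsWithin_le_nhds
        have heq : ∀ᶠ s in nhdsWithin τ (Set.Iio τ), φ (x s) = (fun _ => (0 : Fin (n-p) → ℝ)) s := by
          filter_upwards [Ioo_mem_nhdsLT_of_mem (Set.mem_Ioc.mpr ⟨h, le_refl τ⟩)] with s hs
          exact hlt s hs.1.le hs.2
        exact tendsto_nhds_unique (hct.congr' heq) tendsto_const_nhds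
    have hτS : ∀ s ∈ Set.Icc (0:ℝ) τ, φ (x s) = 0 := by
      intro s hs
      rcases lt_or_eq_of_le hs.2 with h | h
      · exact hlt s hs.1 h
      · rw [h]; exact hτ0
    rcases eq_or_lt_of_le hτb with heq | hltb
    · rw [← heq]; exact hτ0
    exfalso
    -- local solution of the target dynamics through x τ
    have hxτmem : x τ ∈ Set.range π := by rw [← hman]; exact hτ0
    obtain ⟨ξ0, hξ0⟩ := hxτmem
    obtain ⟨ξc, hξc0, ε, hε, hξc⟩ :=
      ContDiffAt.exists_forall_mem_closedBall_exists_eq_forall_mem_Ioo_hasDerivAt₀ (x₀ := ξ0) (hα.of_le (by simp)).contDiffAt τ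
    set y : ℝ → Fin n → ℝ := fun s => π (ξc s) with hy
    have hyd : ∀ t ∈ Set.Ioo (τ - ε) (τ + ε), HasDerivAt y (X (y t)) t :=
      fun t ht => sol_of_target ξc t (hξc t ht)
    have hyτ : y τ = x τ := by rw [hy]; simp only [hξc0, hξ0]
    -- Lipschitz neighbourhood of x τ
    obtain ⟨K, sl, hsl, hlip⟩ := (hXsmooth.of_le (by simp)).contDiffAt.exists_lipschitzOnWith
    obtain ⟨r, hr, hball⟩ := Metric.mem_nhds_iff.mp hsl
    have hlipb : LipschitzOnWith K X (Metric.ball (x τ) r) := hlip.mono hball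
    -- choose δ so that trajectories stay in the ball
    have hnbx : x ⁻¹' (Metric.ball (x τ) r) ∈ nhds τ :=
      hxc τ hτ0le (Metric.ball_mem_nhds (x τ) hr)
    have hycont : ContinuousAt y τ :=
      (hyd τ ⟨by linarith, by linarith⟩).continuousAt
    have hnby : y ⁻¹' (Metric.ball (x τ) r) ∈ nhds τ := by
      apply hycont
      rw [hyτ]
      exact Metric.ball_mem_nhds (x τ) hr
    obtain ⟨δ₂, hδ₂, hδball⟩ := Metric.mem_nhds_iff.mp (Filter.inter_mem hnbx hnby)
    set δ : ℝ := min (min (ε/2) (δ₂/2)) (b - τ) with hδdef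
    have hδpos : 0 < δ := by
      apply lt_min (lt_min (by linarith) (by linarith)) (by linarith)
    have hδε : δ < ε := lt_of_le_of_lt (le_trans (min_le_left _ _) (min_le_left _ _)) (by linarith)
    have hδδ₂ : δ < δ₂ := lt_of_le_of_lt (le_trans (min_le_left _ _) (min_le_right _ _)) (by linarith)
    have hδb : τ + δ ≤ b := by
      have := min_le_right (min (ε/2) (δ₂/2)) (b - τ)
      linarith
    have hsub : ∀ t ∈ Set.Icc τ (τ + δ), t ∈ Metric.ball τ δ₂ := by
      intro t ht
      rw [Metric.mem_ball, Real.dist_eq, abs_of_nonneg (by linarith [ht.1])]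
      linarith [ht.2]
    have hmemx : ∀ t ∈ Set.Ico τ (τ + δ), x t ∈ Metric.ball (x τ) r :=
      fun t ht => (hδball (hsub t ⟨ht.1, ht.2.le⟩)).1
    have hmemy : ∀ t ∈ Set.Ico τ (τ + δ), y t ∈ Metric.ball (x τ) r :=
      fun t ht => (hδball (hsub t ⟨ht.1, ht.2.le⟩)).2
    have hcx : ContinuousOn x (Set.Icc τ (τ + δ)) :=
      continuousOn_of_forall_continuousAt fun t ht => hxc t (le_trans hτ0le ht.1)
    have hcy : ContinuousOn y (Set.Icc τ (τ + δ)) :=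
      continuousOn_of_forall_continuousAt fun t ht =>
        (hyd t ⟨by linarith [ht.1], by linarith [ht.2]⟩).continuousAt
    have heqon : Set.EqOn x y (Set.Icc τ (τ + δ)) := by
      apply ODE_solution_unique_of_mem_Icc_right
        (v := fun _ : ℝ => X) (s := fun _ : ℝ => Metric.ball (x τ) r) (K := K)
        (fun _ _ => hlipb) hcx ?_ hmemx hcy ?_ hmemy hyτ.symm
      · intro t ht
        exact (hx t (le_trans hτ0le ht.1)).hasDerivWithinAt
      · intro t ht
        exact (hyd t ⟨by linarith [ht.1], by linarith [ht.2]⟩).hasDerivWithinAt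
    have hτδS : τ + δ ∈ S := by
      refine ⟨⟨by linarith, hδb⟩, fun s hs => ?_⟩
      rcases le_or_gt s τ with h | h
      · exact hτS s ⟨hs.1, h⟩
      · have hs' : s ∈ Set.Icc τ (τ + δ) := ⟨h.le, hs.2⟩
        rw [heqon hs', hy]
        exact hφπ (ξc s)
    have := le_csSup hbdd hτδS
    linarith

  · -- attractivity
    intro x hx
    set z : ℝ → Fin (n-p) → ℝ := fun t => φ (x t) with hz
    have hzd : ∀ t : ℝ, 0 ≤ t →
        HasDerivAt z ((fderiv ℝ φ (x t)) (f (x t) + g (x t) *ᵥ v (x t) (z t))) t := by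
      intro t ht
      exact ((hφ.differentiable (by simp)).differentiableAt).hasFDerivAt.comp_hasDerivAt t (hx t ht)
    obtain ⟨⟨M, hM⟩, hztend⟩ := hA4 z x rfl hx hzd
    refine ⟨⟨M, fun t ht => (hM t ht).1⟩, hztend, ?_⟩
    -- dist → 0 by compactness
    by_contra hcon
    rw [Metric.tendsto_atTop] at hcon
    push_neg at hcon
    obtain ⟨ε, hε, hfreq⟩ := hcon
    choose u hu hudist using hfreq
    have hunn : ∀ k : ℕ, (0:ℝ) ≤ u k := fun k => le_trans (Nat.cast_nonneg k) (hu k)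
    have hmem : ∀ k : ℕ, x (u k) ∈ Metric.closedBall (0 : Fin n → ℝ) M := by
      intro k
      rw [Metric.mem_closedBall, dist_zero_right]
      exact (hM (u k) (hunn k)).1
    obtain ⟨xbar, hxbarK, ψ, hψmono, hψtend⟩ :=
      (isCompact_closedBall (0 : Fin n → ℝ) M).tendsto_subseq hmem
    have hutend : Tendsto (fun k : ℕ => u (k : ℝ)) atTop atTop :=
      tendsto_atTop_mono (fun k => hu k) tendsto_natCast_atTop_atTop
    have hψu : Tendsto (fun k : ℕ => u (ψ k : ℝ)) atTop atTop :=
      hutend.comp hψmono.tendsto_atTop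
    have hφxbar : φ xbar = 0 := by
      have h1 : Tendsto (fun k => φ (x (u (ψ k : ℝ)))) atTop (nhds (φ xbar)) :=
        ((hφ.continuous.tendsto xbar).comp hψtend)
      have h2 : Tendsto (fun k => φ (x (u (ψ k : ℝ)))) atTop (nhds 0) :=
        hztend.comp hψu
      exact tendsto_nhds_unique h1 h2
    have hxbarM : xbar ∈ Set.range π := by
      rw [← hman]; exact hφxbar
    have h3 : Tendsto (fun k => Metric.infDist (x (u (ψ k : ℝ))) (Set.range π)) atTop
        (nhds 0) := by
      have := ((Metric.continuous_infDist_pt (Set.range π)).tendsto xbar).comp hψtend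
      rwa [Metric.infDist_zero_of_mem hxbarM] at this
    have h4 : ∀ k : ℕ, ε ≤ Metric.infDist (x (u (ψ k : ℝ))) (Set.range π) := by
      intro k
      have := hudist (ψ k : ℝ)
      rwa [Real.dist_eq, sub_zero, abs_of_nonneg Metric.infDist_nonneg] at this
    have := ge_of_tendsto' h3 h4
    linarith
end

section
/- Let f : ℝⁿ → ℝⁿ, let g : ℝⁿ → ℝ^{n×m} (m < n) have full column rank at every point, and let g⊥ : ℝⁿ → ℝ^{(n−m)×n} satisfy g⊥(x)g(x) = 0 with g⊥(x) of rank n−m for every x. Let α : ℝᵖ → ℝᵖ and π : ℝᵖ → ℝⁿ be smooth maps satisfying the projected Francis–Byrnes–Isidori equation g⊥(π(ξ))[f(π(ξ)) − Dπ(ξ)α(ξ)] = 0 for all ξ ∈ ℝᵖ, and define c(π(ξ)) := [g(π(ξ))ᵀg(π(ξ))]⁻¹ g(π(ξ))ᵀ [Dπ(ξ)α(ξ) − f(π(ξ))]. Then for every solution ξ(t) of ξ̇ = α(ξ), the curve x(t) := π(ξ(t)) satisfies ẋ(t) = f(x(t)) + g(x(t)) c(π(ξ(t))) for all t; i.e.,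 the manifold {x = π(ξ)} is rendered invariant by the control u = c(π(ξ)). -/
open Matrix

lemma aux_key {n m : ℕ} (hmn : m < n)
    (A : Matrix (Fin n) (Fin m) ℝ) (B : Matrix (Fin (n - m)) (Fin n) ℝ)
    (hA : A.rank = m) (hB : B.rank = n - m) (hBA : B * A = 0)
    (v : Fin n → ℝ) (hv : B *ᵥ v = 0) :
    A *ᵥ ((Aᵀ * A)⁻¹ *ᵥ (Aᵀ *ᵥ v)) = v := by
  have hle : LinearMap.range A.mulVecLin ≤ LinearMap.ker B.mulVecLin := by
    rintro u ⟨w, rfl⟩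
    simp only [LinearMap.mem_ker, Matrix.mulVecLin_apply, Matrix.mulVec_mulVec, hBA,
      Matrix.zero_mulVec]
  have hkerdim : Module.finrank ℝ (LinearMap.ker B.mulVecLin) = m := by
    have := LinearMap.finrank_range_add_finrank_ker B.mulVecLin
    have hr : Module.finrank ℝ (LinearMap.range B.mulVecLin) = n - m := hB
    rw [hr] at this
    simp only [Module.finrank_fintype_fun_eq_card, Fintype.card_fin] at this
    omega
  have heq : LinearMap.range A.mulVecLin = LinearMap.ker B.mulVecLin := by
    apply Submodule.eq_of_le_of_finrank_eq hle
    rw [hkerdim]; exact hA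
  have hvmem : v ∈ LinearMap.range A.mulVecLin := by
    rw [heq]; exact hv
  obtain ⟨w, rfl⟩ := hvmem
  -- ker A = ⊥
  have hkerA : LinearMap.ker A.mulVecLin = ⊥ := by
    have := LinearMap.finrank_range_add_finrank_ker A.mulVecLin
    have hr : Module.finrank ℝ (LinearMap.range A.mulVecLin) = m := hA
    rw [hr] at this
    simp only [Module.finrank_fintype_fun_eq_card, Fintype.card_fin] at this
    have : Module.finrank ℝ (LinearMap.ker A.mulVecLin) = 0 := by omega
    exact Submodule.finrank_eq_zero.mp this
  have hdet : IsUnit (Aᵀ * A).det := by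
    rw [isUnit_iff_ne_zero]
    intro h
    obtain ⟨u, hu0, hu⟩ := (Matrix.exists_mulVec_eq_zero_iff).mpr h
    have : u ∈ LinearMap.ker (Aᵀ * A).mulVecLin := hu
    rw [Matrix.ker_mulVecLin_transpose_mul_self, hkerA] at this
    exact hu0 this
  simp only [Matrix.mulVecLin_apply, Matrix.mulVec_mulVec]
  rw [Matrix.nonsing_inv_mul _ hdet, Matrix.mul_one]


/-- if the projected Francis–Byrnes–Isidori equation
`g⊥(π ξ) [f (π ξ) - Dπ(ξ) α(ξ)] = 0` holds for all `ξ`, where `g` has full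
column rank everywhere and `g⊥` is a full-rank left annihilator of `g`, and
`c (π ξ) = (g(π ξ)ᵀ g(π ξ))⁻¹ g(π ξ)ᵀ (Dπ(ξ) α(ξ) - f (π ξ))`, then for every
solution `ξ(t)` of `ξ̇ = α(ξ)` the curve `x(t) = π (ξ(t))` satisfies
`ẋ = f(x) + g(x) c(π(ξ))`, i.e. the manifold `{x = π ξ}` is rendered invariant
by the control `u = c (π ξ)`. -/
theorem stmt1 (n m p : ℕ) (hmn : m < n)
    (f : (Fin n → ℝ) → (Fin n → ℝ))
    (g : (Fin n → ℝ) → Matrix (Fin n) (Fin m) ℝ)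
    (gperp : (Fin n → ℝ) → Matrix (Fin (n - m)) (Fin n) ℝ)
    (hf : ContDiff ℝ (⊤ : ℕ∞) f)
    (hg : ∀ i j, ContDiff ℝ (⊤ : ℕ∞) (fun x => g x i j))
    (hgrank : ∀ x, (g x).rank = m)
    (hgperprank : ∀ x, (gperp x).rank = n - m)
    (hannih : ∀ x, gperp x * g x = 0)
    (α : (Fin p → ℝ) → (Fin p → ℝ)) (π : (Fin p → ℝ) → (Fin n → ℝ))
    (hα : ContDiff ℝ (⊤ : ℕ∞) α) (hπ : ContDiff ℝ (⊤ : ℕ∞) π)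
    (hFBI : ∀ ξ : Fin p → ℝ,
      gperp (π ξ) *ᵥ (f (π ξ) - (fderiv ℝ π ξ) (α ξ)) = 0)
    (c : (Fin p → ℝ) → (Fin m → ℝ))
    (hc : ∀ ξ : Fin p → ℝ,
      c ξ = ((g (π ξ))ᵀ * g (π ξ))⁻¹ *ᵥ
        ((g (π ξ))ᵀ *ᵥ ((fderiv ℝ π ξ) (α ξ) - f (π ξ)))) :
    ∀ ξ : ℝ → Fin p → ℝ, (∀ t, HasDerivAt ξ (α (ξ t)) t) →
      ∀ t : ℝ, HasDerivAt (fun s => π (ξ s))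
        (f (π (ξ t)) + g (π (ξ t)) *ᵥ c (ξ t)) t := by
  intro ξ hξ t
  have hπd : HasFDerivAt π (fderiv ℝ π (ξ t)) (ξ t) :=
    (hπ.differentiable (by simp) (ξ t)).hasFDerivAt
  have hcomp := hπd.comp_hasDerivAt t (hξ t)
  have hkey : g (π (ξ t)) *ᵥ c (ξ t)
      = (fderiv ℝ π (ξ t)) (α (ξ t)) - f (π (ξ t)) := by
    rw [hc (ξ t)]
    apply aux_key hmn _ _ (hgrank _) (hgperprank _) (hannih _)
    have := hFBI (ξ t)
    have h2 : gperp (π (ξ t)) *ᵥ ((fderiv ℝ π (ξ t)) (α (ξ t)) - f (π (ξ t)))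
        = - (gperp (π (ξ t)) *ᵥ (f (π (ξ t)) - (fderiv ℝ π (ξ t)) (α (ξ t)))) := by
      rw [← Matrix.mulVec_neg, neg_sub]
    rw [h2, this, neg_zero]
  rw [hkey]
  have : f (π (ξ t)) + ((fderiv ℝ π (ξ t)) (α (ξ t)) - f (π (ξ t)))
      = (fderiv ℝ π (ξ t)) (α (ξ t)) := by abel
  rw [this]
  exact hcomp
end

section
/- (Lemma 1) Consider the nonlinear time-varying system ẋ₁ = x₃, ẋ₃ = −a sin(x₁) + ε(t), with a > 0, (x₁, x₃) ∈ 𝒮 × ℝ, where the perturbation satisfies |ε(t)| ≤ ℓ₁ e^{−ℓ₂ t} for some ℓ₁ > 0, ℓ₂ > 0. Then every solution has x₃(t) bounded for all t > 0. -/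
/-- Lemma 1: For the perturbed undamped pendulum
`ẋ₁ = x₃`, `ẋ₃ = -a sin x₁ + ε t` with `a > 0` and an exponentially decaying
perturbation `|ε t| ≤ ℓ₁ exp (-ℓ₂ t)` (`ℓ₁, ℓ₂ > 0`), the velocity `x₃` is
bounded for all `t > 0`. -/
theorem stmt3 (a ℓ₁ ℓ₂ : ℝ) (ha : 0 < a) (hℓ₁ : 0 < ℓ₁) (hℓ₂ : 0 < ℓ₂)
    (x₁ x₃ ε : ℝ → ℝ)
    (hx₁ : ∀ t, 0 ≤ t → HasDerivAt x₁ (x₃ t) t)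
    (hx₃ : ∀ t, 0 ≤ t → HasDerivAt x₃ (-a * Real.sin (x₁ t) + ε t) t)
    (hε : ∀ t, 0 ≤ t → |ε t| ≤ ℓ₁ * Real.exp (-ℓ₂ * t)) :
    ∃ M : ℝ, ∀ t, 0 < t → |x₃ t| ≤ M := by
  set E : ℝ → ℝ := fun s => x₃ s * x₃ s / 2 - a * Real.cos (x₁ s) + a + 1 with hEdef
  clear_value E
  have hEval : ∀ s, E s = x₃ s * x₃ s / 2 - a * Real.cos (x₁ s) + a + 1 := by
    intro s; rw [hEdef]
  have hEpos : ∀ s, x₃ s ^ 2 / 2 + 1 ≤ E s := by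
    intro s
    have hc : Real.cos (x₁ s) ≤ 1 := Real.cos_le_one _
    have h2 : a * Real.cos (x₁ s) ≤ a * 1 := mul_le_mul_of_nonneg_left hc ha.le
    rw [hEval]; nlinarith
  have hE1 : ∀ s, (1:ℝ) ≤ E s := fun s => by nlinarith [hEpos s, sq_nonneg (x₃ s)]
  have hEne : ∀ s, E s ≠ 0 := fun s => by nlinarith [hE1 s]
  have hE' : ∀ t, 0 ≤ t → HasDerivAt E (x₃ t * ε t) t := by
    intro t ht
    rw [hEdef]
    have h3 := hx₃ t ht
    have h1 := hx₁ t ht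
    have hsq : HasDerivAt (fun s => x₃ s * x₃ s / 2)
        (((-a * Real.sin (x₁ t) + ε t) * x₃ t + x₃ t * (-a * Real.sin (x₁ t) + ε t)) / 2) t :=
      (h3.mul h3).div_const 2
    have hcos : HasDerivAt (fun s => Real.cos (x₁ s))
        (-Real.sin (x₁ t) * x₃ t) t := (Real.hasDerivAt_cos (x₁ t)).comp t h1
    have := ((hsq.sub (hcos.const_mul a)).add_const a).add_const 1
    refine this.congr_deriv ?_
    ring
  set W : ℝ → ℝ := fun s => Real.sqrt (E s) with hWdef
  clear_value W
  have hWval : ∀ s, W s = Real.sqrt (E s) := fun s => by rw [hWdef]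
  have hWpos : ∀ s, 0 < W s := fun s => by
    rw [hWval]; exact Real.sqrt_pos.mpr (by nlinarith [hE1 s])
  have hW' : ∀ t, 0 ≤ t →
      HasDerivAt W (x₃ t * ε t / (2 * Real.sqrt (E t))) t := by
    intro t ht
    rw [hWdef]
    have := (Real.hasDerivAt_sqrt (hEne t)).comp t (hE' t ht)
    refine this.congr_deriv ?_
    field_simp
  have hx3W : ∀ s, |x₃ s| ≤ 2 * W s := by
    intro s
    have hle : x₃ s ^ 2 ≤ 4 * E s := by nlinarith [hEpos s, hE1 s]
    have hE0 : (0:ℝ) ≤ E s := by linarith [hE1 s]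
    calc |x₃ s| = Real.sqrt (x₃ s ^ 2) := (Real.sqrt_sq_eq_abs _).symm
      _ ≤ Real.sqrt (4 * E s) := Real.sqrt_le_sqrt hle
      _ = 2 * Real.sqrt (E s) := by
          rw [show (4:ℝ) * E s = 2 ^ 2 * E s by ring,
            Real.sqrt_mul (by positivity), Real.sqrt_sq (by norm_num)]
      _ = 2 * W s := by rw [hWval]
  set g : ℝ → ℝ := fun s => W s + (ℓ₁ / ℓ₂) * Real.exp (-ℓ₂ * s) with hgdef
  clear_value g
  have hgval : ∀ s, g s = W s + (ℓ₁ / ℓ₂) * Real.exp (-ℓ₂ * s) := fun s => by rw [hgdef]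
  have hg' : ∀ t, 0 ≤ t → HasDerivAt g
      (x₃ t * ε t / (2 * Real.sqrt (E t)) + (ℓ₁ / ℓ₂) * (Real.exp (-ℓ₂ * t) * (-ℓ₂))) t := by
    intro t ht
    rw [hgdef]
    have hexp : HasDerivAt (fun s => Real.exp (-ℓ₂ * s)) (Real.exp (-ℓ₂ * t) * (-ℓ₂)) t := by
      have h := (Real.hasDerivAt_exp (-ℓ₂ * t)).comp t ((hasDerivAt_id t).const_mul (-ℓ₂))
      refine h.congr_deriv ?_
      ring
    exact (hW' t ht).add (hexp.const_mul (ℓ₁ / ℓ₂))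
  have hderiv_nonpos : ∀ t, 0 ≤ t →
      x₃ t * ε t / (2 * Real.sqrt (E t)) + (ℓ₁ / ℓ₂) * (Real.exp (-ℓ₂ * t) * (-ℓ₂)) ≤ 0 := by
    intro t ht
    have hWt := hWpos t
    have hsE : 0 < Real.sqrt (E t) := by rw [← hWval]; exact hWt
    have hbound : x₃ t * ε t / (2 * Real.sqrt (E t)) ≤ ℓ₁ * Real.exp (-ℓ₂ * t) := by
      have h1 : x₃ t * ε t ≤ |x₃ t| * (ℓ₁ * Real.exp (-ℓ₂ * t)) := by
        calc x₃ t * ε t ≤ |x₃ t * ε t| := le_abs_self _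
          _ = |x₃ t| * |ε t| := abs_mul _ _
          _ ≤ |x₃ t| * (ℓ₁ * Real.exp (-ℓ₂ * t)) :=
              mul_le_mul_of_nonneg_left (hε t ht) (abs_nonneg _)
      have h2 : |x₃ t| * (ℓ₁ * Real.exp (-ℓ₂ * t)) ≤
          2 * W t * (ℓ₁ * Real.exp (-ℓ₂ * t)) :=
        mul_le_mul_of_nonneg_right (hx3W t) (by positivity)
      rw [div_le_iff₀ (by positivity)]
      calc x₃ t * ε t ≤ 2 * W t * (ℓ₁ * Real.exp (-ℓ₂ * t)) := le_trans h1 h2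
        _ = ℓ₁ * Real.exp (-ℓ₂ * t) * (2 * Real.sqrt (E t)) := by rw [hWval]; ring
    have h3 : (ℓ₁ / ℓ₂) * (Real.exp (-ℓ₂ * t) * (-ℓ₂)) = -(ℓ₁ * Real.exp (-ℓ₂ * t)) := by
      field_simp
    rw [h3]
    linarith
  have hanti : AntitoneOn g (Set.Ici (0:ℝ)) := by
    apply antitoneOn_of_deriv_nonpos (convex_Ici 0)
    · intro s hs
      exact ((hg' s hs).continuousAt).continuousWithinAt
    · intro s hs
      rw [interior_Ici] at hs
      exact ((hg' s (le_of_lt hs)).differentiableAt).differentiableWithinAt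
    · intro s hs
      rw [interior_Ici] at hs
      rw [(hg' s (le_of_lt hs)).deriv]
      exact hderiv_nonpos s (le_of_lt hs)
  refine ⟨2 * (W 0 + ℓ₁ / ℓ₂), fun t ht => ?_⟩
  have hgt : g t ≤ g 0 := hanti Set.self_mem_Ici (le_of_lt ht) (le_of_lt ht)
  have hWt : W t ≤ g t := by
    have hp : 0 < (ℓ₁ / ℓ₂) * Real.exp (-ℓ₂ * t) := by positivity
    rw [hgval]; linarith
  have hg0 : g 0 ≤ W 0 + ℓ₁ / ℓ₂ := by
    rw [hgval]
    have he : Real.exp (-ℓ₂ * 0) = 1 := by norm_num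
    rw [he, mul_one]
  calc |x₃ t| ≤ 2 * W t := hx3W t
    _ ≤ 2 * (W 0 + ℓ₁ / ℓ₂) := by linarith
end

section
/- Consider differentiable functions x₁, x₃ : [0, ∞) → ℝ with ẋ₁ = x₃ and ẋ₃ = −a sin(x₁) + ε(t), where a > 0 and |ε(t)| ≤ ℓ₁ e^{−ℓ₂ t} for all t ≥ 0, with ℓ₁, ℓ₂ > 0. Define the energy r(t) := ½ x₃(t)² − a cos(x₁(t)), ℓ₃ := ℓ₁|x₃(0)| and ℓ₄ := ℓ₁(a + ℓ₁). Then r(t) ≤ r(0) + ℓ₃/ℓ₂ + ℓ₄/ℓ₂² for all t ≥ 0; in particular r(t) is bounded, and consequently x₃(t) is bounded. -/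
/-- For the perturbed undamped pendulum `ẋ₁ = x₃`,
`ẋ₃ = -a sin x₁ + ε t` with `a > 0`, `|ε t| ≤ ℓ₁ exp (-ℓ₂ t)` (`ℓ₁, ℓ₂ > 0`),
the energy `r t = ½ x₃ t ^ 2 - a cos (x₁ t)` satisfies
`r t ≤ r 0 + ℓ₃ / ℓ₂ + ℓ₄ / ℓ₂ ^ 2` with `ℓ₃ = ℓ₁ |x₃ 0|`, `ℓ₄ = ℓ₁ (a + ℓ₁)`;
in particular `r` is bounded and consequently `x₃` is bounded. -/
theorem stmt5 (a ℓ₁ ℓ₂ : ℝ) (ha : 0 < a) (hℓ₁ : 0 < ℓ₁) (hℓ₂ : 0 < ℓ₂)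
    (x₁ x₃ ε : ℝ → ℝ)
    (hx₁ : ∀ t, 0 ≤ t → HasDerivAt x₁ (x₃ t) t)
    (hx₃ : ∀ t, 0 ≤ t → HasDerivAt x₃ (-a * Real.sin (x₁ t) + ε t) t)
    (hε : ∀ t, 0 ≤ t → |ε t| ≤ ℓ₁ * Real.exp (-ℓ₂ * t))
    (r : ℝ → ℝ)
    (hr : ∀ t, r t = (1 / 2) * (x₃ t) ^ 2 - a * Real.cos (x₁ t))
    (ℓ₃ ℓ₄ : ℝ) (hℓ₃ : ℓ₃ = ℓ₁ * |x₃ 0|) (hℓ₄ : ℓ₄ = ℓ₁ * (a + ℓ₁)) :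
    (∀ t, 0 ≤ t → r t ≤ r 0 + ℓ₃ / ℓ₂ + ℓ₄ / ℓ₂ ^ 2) ∧
    (∃ M : ℝ, ∀ t, 0 ≤ t → |r t| ≤ M) ∧
    (∃ M : ℝ, ∀ t, 0 ≤ t → |x₃ t| ≤ M) := by
  have hℓ₃0 : 0 ≤ ℓ₃ := by rw [hℓ₃]; positivity
  have hℓ₄0 : 0 ≤ ℓ₄ := by rw [hℓ₄]; positivity
  set E : ℝ → ℝ := fun t => Real.exp (-ℓ₂ * t) with hE
  -- linear growth bound on x₃
  have hgrow : ∀ t, 0 ≤ t → |x₃ t| ≤ |x₃ 0| + (a + ℓ₁) * t := by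
    intro t ht
    have key : ‖x₃ t - x₃ 0‖ ≤ (a + ℓ₁) * ‖t - 0‖ := by
      apply Convex.norm_image_sub_le_of_norm_hasDerivWithin_le
        (f' := fun s => -a * Real.sin (x₁ s) + ε s) ?_ ?_ (convex_Icc 0 t)
        (Set.left_mem_Icc.2 ht) (Set.right_mem_Icc.2 ht)
      · intro s hs
        exact (hx₃ s hs.1).hasDerivWithinAt
      · intro s hs
        have h1 : |(-a) * Real.sin (x₁ s)| ≤ a := by
          rw [abs_mul, abs_neg, abs_of_pos ha]
          nlinarith [Real.abs_sin_le_one (x₁ s), ha.le, abs_nonneg (Real.sin (x₁ s))]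
        have h2 : |ε s| ≤ ℓ₁ := by
          refine (hε s hs.1).trans ?_
          nlinarith [Real.exp_le_one_iff.2 (by nlinarith [hs.1] : -ℓ₂ * s ≤ 0)]
        calc ‖-a * Real.sin (x₁ s) + ε s‖ ≤ |(-a) * Real.sin (x₁ s)| + |ε s| := abs_add_le _ _
        _ ≤ a + ℓ₁ := add_le_add h1 h2
    have : |x₃ t - x₃ 0| ≤ (a + ℓ₁) * t := by
      simpa [Real.norm_eq_abs, abs_of_nonneg ht] using key
    have := abs_sub_abs_le_abs_sub (x₃ t) (x₃ 0)
    linarith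
  -- the comparison function
  set F : ℝ → ℝ := fun t =>
    ℓ₃ / ℓ₂ * (1 - E t) + ℓ₄ * (1 / ℓ₂ ^ 2 - t / ℓ₂ * E t - 1 / ℓ₂ ^ 2 * E t) with hF
  set g : ℝ → ℝ := fun t => F t + r 0 - r t with hg
  have hEderiv : ∀ t : ℝ, HasDerivAt E (-ℓ₂ * E t) t := by
    intro t
    have := ((hasDerivAt_id t).const_mul (-ℓ₂)).exp
    simpa [hE, mul_comm] using this
  have hrderiv : ∀ t, 0 ≤ t → HasDerivAt r (x₃ t * ε t) t := by
    intro t ht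
    have h1 : HasDerivAt (fun s => (1 / 2 : ℝ) * x₃ s ^ 2 - a * Real.cos (x₁ s))
        (x₃ t * ε t) t := by
      have hsq : HasDerivAt (fun s => (1 / 2 : ℝ) * x₃ s ^ 2)
          ((1 / 2 : ℝ) * (2 * x₃ t * (-a * Real.sin (x₁ t) + ε t))) t := by
        have := ((hx₃ t ht).pow 2).const_mul (1 / 2 : ℝ)
        refine this.congr_deriv ?_
        push_cast
        ring
      have hcos : HasDerivAt (fun s => a * Real.cos (x₁ s))
          (a * (-Real.sin (x₁ t) * x₃ t)) t :=
        ((Real.hasDerivAt_cos (x₁ t)).comp t (hx₁ t ht)).const_mul a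
      have := hsq.sub hcos
      refine this.congr_deriv ?_
      ring
    have heq : r = fun s => (1 / 2 : ℝ) * x₃ s ^ 2 - a * Real.cos (x₁ s) := funext hr
    rw [heq]; exact h1
  have hgderiv : ∀ t, 0 ≤ t →
      HasDerivAt g (ℓ₃ * E t + ℓ₄ * t * E t - x₃ t * ε t) t := by
    intro t ht
    have hF1 : HasDerivAt (fun s => ℓ₃ / ℓ₂ * (1 - E s)) (ℓ₃ / ℓ₂ * (ℓ₂ * E t)) t := by
      have := ((hasDerivAt_const t (1 : ℝ)).sub (hEderiv t)).const_mul (ℓ₃ / ℓ₂)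
      refine this.congr_deriv ?_; ring
    have ht1 : HasDerivAt (fun s : ℝ => s / ℓ₂ * E s)
        (1 / ℓ₂ * E t + t / ℓ₂ * (-ℓ₂ * E t)) t := by
      have := ((hasDerivAt_id t).div_const ℓ₂).mul (hEderiv t)
      exact this.congr_deriv (by simp [id])
    have hF2 : HasDerivAt (fun s => ℓ₄ * (1 / ℓ₂ ^ 2 - s / ℓ₂ * E s - 1 / ℓ₂ ^ 2 * E s))
        (ℓ₄ * (0 - (1 / ℓ₂ * E t + t / ℓ₂ * (-ℓ₂ * E t)) - 1 / ℓ₂ ^ 2 * (-ℓ₂ * E t))) t := by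
      exact (((hasDerivAt_const t _).sub ht1).sub ((hEderiv t).const_mul (1 / ℓ₂ ^ 2))).const_mul ℓ₄
    have hFd := (hF1.add hF2).add (hasDerivAt_const t (r 0))
    have := hFd.sub (hrderiv t ht)
    refine this.congr_deriv ?_
    field_simp
    ring
  -- g is monotone on [0, ∞)
  have hmono : MonotoneOn g (Set.Ici (0 : ℝ)) := by
    apply monotoneOn_of_hasDerivWithinAt_nonneg (convex_Ici 0)
      (f' := fun t => ℓ₃ * E t + ℓ₄ * t * E t - x₃ t * ε t)
    · intro t ht
      exact ((hgderiv t ht).continuousAt).continuousWithinAt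
    · intro t ht
      rw [interior_Ici] at ht
      exact (hgderiv t (le_of_lt ht)).hasDerivWithinAt
    · intro t ht
      rw [interior_Ici] at ht
      have ht' : (0 : ℝ) ≤ t := le_of_lt ht
      have hE0 : 0 < E t := Real.exp_pos _
      have h1 : x₃ t * ε t ≤ |x₃ t| * |ε t| := by
        calc x₃ t * ε t ≤ |x₃ t * ε t| := le_abs_self _
        _ = |x₃ t| * |ε t| := abs_mul _ _
      have h2 : |x₃ t| * |ε t| ≤ (|x₃ 0| + (a + ℓ₁) * t) * (ℓ₁ * E t) :=
        mul_le_mul (hgrow t ht') (hε t ht') (abs_nonneg _)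
          (by positivity)
      have : x₃ t * ε t ≤ ℓ₃ * E t + ℓ₄ * t * E t := by
        rw [hℓ₃, hℓ₄]
        nlinarith [abs_nonneg (x₃ 0)]
      linarith
  -- main bound
  have hmain : ∀ t, 0 ≤ t → r t ≤ r 0 + ℓ₃ / ℓ₂ + ℓ₄ / ℓ₂ ^ 2 := by
    intro t ht
    have hg0 : g 0 = 0 := by
      simp [hg, hF, hE]
    have := hmono (Set.self_mem_Ici) (Set.mem_Ici.2 ht) ht
    rw [hg0] at this
    -- 0 ≤ g t = F t + r 0 - r t
    have hFle : F t ≤ ℓ₃ / ℓ₂ + ℓ₄ / ℓ₂ ^ 2 := by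
      have hE0 : 0 < E t := Real.exp_pos _
      have hE1 : E t ≤ 1 := Real.exp_le_one_iff.2 (by nlinarith)
      have h1 : ℓ₃ / ℓ₂ * (1 - E t) ≤ ℓ₃ / ℓ₂ := by
        have : 0 ≤ ℓ₃ / ℓ₂ := by positivity
        nlinarith
      have h2 : ℓ₄ * (1 / ℓ₂ ^ 2 - t / ℓ₂ * E t - 1 / ℓ₂ ^ 2 * E t) ≤ ℓ₄ / ℓ₂ ^ 2 := by
        have ht2 : 0 ≤ t / ℓ₂ * E t := by positivity
        have ht3 : 0 ≤ 1 / ℓ₂ ^ 2 * E t := by positivity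
        have : 1 / ℓ₂ ^ 2 - t / ℓ₂ * E t - 1 / ℓ₂ ^ 2 * E t ≤ 1 / ℓ₂ ^ 2 := by linarith
        calc ℓ₄ * (1 / ℓ₂ ^ 2 - t / ℓ₂ * E t - 1 / ℓ₂ ^ 2 * E t) ≤ ℓ₄ * (1 / ℓ₂ ^ 2) :=
          mul_le_mul_of_nonneg_left this hℓ₄0
        _ = ℓ₄ / ℓ₂ ^ 2 := by ring
      simp only [hF]
      linarith
    simp only [hg] at this
    clear_value F g E
    linarith
  refine ⟨hmain, ?_, ?_⟩
  · -- boundedness of r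
    refine ⟨|r 0 + ℓ₃ / ℓ₂ + ℓ₄ / ℓ₂ ^ 2| + a, fun t ht => ?_⟩
    rw [abs_le]
    constructor
    · -- r t ≥ -a
      have h1 : -a ≤ r t := by
        rw [hr t]
        nlinarith [sq_nonneg (x₃ t),
          mul_le_mul_of_nonneg_left (Real.cos_le_one (x₁ t)) ha.le]
      have : (0:ℝ) ≤ |r 0 + ℓ₃ / ℓ₂ + ℓ₄ / ℓ₂ ^ 2| := abs_nonneg _
      linarith
    · have := hmain t ht
      have h2 : r 0 + ℓ₃ / ℓ₂ + ℓ₄ / ℓ₂ ^ 2 ≤ |r 0 + ℓ₃ / ℓ₂ + ℓ₄ / ℓ₂ ^ 2| := le_abs_self _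
      linarith [ha.le]
  · -- boundedness of x₃
    refine ⟨Real.sqrt (2 * (|r 0 + ℓ₃ / ℓ₂ + ℓ₄ / ℓ₂ ^ 2| + a)), fun t ht => ?_⟩
    apply Real.abs_le_sqrt
    have h1 := hmain t ht
    have h2 : r 0 + ℓ₃ / ℓ₂ + ℓ₄ / ℓ₂ ^ 2 ≤ |r 0 + ℓ₃ / ℓ₂ + ℓ₄ / ℓ₂ ^ 2| := le_abs_self _
    have h3 : (1 / 2 : ℝ) * x₃ t ^ 2 - a * Real.cos (x₁ t) = r t := (hr t).symm
    nlinarith [Real.cos_le_one (x₁ t), ha.le]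
end

section
/- (Lemma 2) Consider the nonlinear time-varying system ẇ₁ = w₂, ẇ₂ = (a₁ sin(w₁) + ε(t)) / (1 + k a₂ cos(w₁)), with a₁ > 0, a₂ > 0, k < −1/a₂, and perturbation satisfying |ε(t)| ≤ ℓ₁ e^{−ℓ₂ t} for some ℓ₁ > 0, ℓ₂ > 0. Define β⋆ := arccos(−1/(k a₂)). If the initial state satisfies w₁(0) ∈ (−β⋆, β⋆), then there exists ℓ₂^{min} > 0 (depending on the data and the initial condition) such that whenever ℓ₂ ≥ ℓ₂^{min}, the solution satisfies w₁(t) ∈ (−β⋆, β⋆) for all t ≥ 0 and |w₂(t)| ≤ M for some constant M. -/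
set_option maxHeartbeats 1000000

/-- Lemma 2: for the system `ẇ₁ = w₂`,
`ẇ₂ = (a₁ sin w₁ + ε t) / (1 + k a₂ cos w₁)` with `a₁, a₂ > 0`, `k < -1/a₂`,
`|ε t| ≤ ℓ₁ exp (-ℓ₂ t)`, `βstar = arccos (-1/(k a₂))` and initial condition
`w₁ 0 ∈ (-βstar, βstar)`, there exists `ℓ₂min > 0` (depending on the data and
the initial condition) such that for every `ℓ₂ ≥ ℓ₂min` the solution stays in
`(-βstar, βstar)` and has bounded velocity. -/
theorem stmt6 (a₁ a₂ k ℓ₁ : ℝ) (ha₁ : 0 < a₁) (ha₂ : 0 < a₂) (hk : k < -(1 / a₂))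
    (hℓ₁ : 0 < ℓ₁) (βstar : ℝ) (hβ : βstar = Real.arccos (-(1 / (k * a₂))))
    (w₁0 w₂0 : ℝ) (h0 : w₁0 ∈ Set.Ioo (-βstar) βstar) :
    ∃ ℓ₂min : ℝ, 0 < ℓ₂min ∧
      ∀ ℓ₂ : ℝ, ℓ₂min ≤ ℓ₂ →
        ∀ w₁ w₂ ε : ℝ → ℝ,
          w₁ 0 = w₁0 → w₂ 0 = w₂0 →
          (∀ t, 0 ≤ t → |ε t| ≤ ℓ₁ * Real.exp (-ℓ₂ * t)) →
          (∀ t, 0 ≤ t → HasDerivAt w₁ (w₂ t) t) →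
          (∀ t, 0 ≤ t →
            HasDerivAt w₂ ((a₁ * Real.sin (w₁ t) + ε t) /
              (1 + k * a₂ * Real.cos (w₁ t))) t) →
          ∃ M : ℝ, ∀ t, 0 ≤ t → w₁ t ∈ Set.Ioo (-βstar) βstar ∧ |w₂ t| ≤ M := by
  -- c := k * a₂ < -1
  set c : ℝ := k * a₂ with hcdef
  clear_value c
  have ha₁' : a₁ ≠ 0 := ne_of_gt ha₁
  have hc : c < -1 := by
    rw [hcdef]
    have h := mul_lt_mul_of_pos_right hk ha₂
    have h2 : -(1 / a₂) * a₂ = -1 := by field_simp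
    rw [h2] at h; exact h
  have hc0 : c < 0 := by linarith
  have hcne : c ≠ 0 := ne_of_lt hc0
  have h1c : 1 + c < 0 := by linarith
  have hacneg : a₁ / c < 0 := div_neg_of_pos_of_neg ha₁ hc0
  -- βstar facts
  have hinvlt : -(1 / c) < 1 := by
    rw [neg_lt, lt_div_iff_of_neg hc0]
    linarith
  have hinvpos : (0:ℝ) < -(1 / c) := by
    have : 1 / c < 0 := div_neg_of_pos_of_neg one_pos hc0
    linarith
  have hcosβ : Real.cos βstar = -(1 / c) := by
    rw [hβ]; exact Real.cos_arccos (by linarith) (by linarith)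
  have hβπ : βstar ≤ Real.pi := by rw [hβ]; exact Real.arccos_le_pi _
  have hβ0 : 0 ≤ βstar := by rw [hβ]; exact Real.arccos_nonneg _
  -- initial cos bound
  have habs0 : |w₁0| < βstar := abs_lt.mpr ⟨h0.1, h0.2⟩
  have hcosw₁0 : Real.cos βstar < Real.cos w₁0 := by
    rw [← Real.cos_abs w₁0]
    exact Real.strictAntiOn_cos ⟨abs_nonneg _, by linarith⟩ ⟨hβ0, hβπ⟩ habs0
  have hD0 : 1 + c * Real.cos w₁0 < 0 := by
    have h1 : c * Real.cos w₁0 < c * Real.cos βstar := mul_lt_mul_of_neg_left hcosw₁0 hc0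
    have h2 : c * Real.cos βstar = -1 := by rw [hcosβ]; field_simp
    linarith
  -- constants
  set U0 : ℝ := (a₁ / c) * Real.log (-(1 + c * Real.cos w₁0)) with hU0def
  clear_value U0
  set L : ℝ := w₂0 ^ 2 / 2 + U0 + 1 with hLdef
  clear_value L
  set δ : ℝ := Real.exp (c * L / a₁) with hδdef
  clear_value δ
  have hδpos : 0 < δ := by rw [hδdef]; exact Real.exp_pos _
  -- δ < -(1+c)
  have hδlt : δ < -(1 + c) := by
    have hsplit : c * L / a₁ = c * (w₂0 ^ 2 / 2 + 1) / a₁ + Real.log (-(1 + c * Real.cos w₁0)) := by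
      rw [hLdef, hU0def]; field_simp; ring
    have hXpos : (0:ℝ) < -(1 + c * Real.cos w₁0) := by linarith
    have hA : c * (w₂0 ^ 2 / 2 + 1) / a₁ < 0 := by
      apply div_neg_of_neg_of_pos _ ha₁
      apply mul_neg_of_neg_of_pos hc0
      positivity
    have hexpA : Real.exp (c * (w₂0 ^ 2 / 2 + 1) / a₁) < 1 := Real.exp_lt_one_iff.mpr hA
    have hXle : -(1 + c * Real.cos w₁0) ≤ -(1 + c) := by
      have : c * 1 ≤ c * Real.cos w₁0 := mul_le_mul_of_nonpos_left (Real.cos_le_one _) hc0.le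
      linarith
    have : δ = Real.exp (c * (w₂0 ^ 2 / 2 + 1) / a₁) * -(1 + c * Real.cos w₁0) := by
      rw [hδdef, hsplit, Real.exp_add, Real.exp_log hXpos]
    rw [this]
    nlinarith [Real.exp_pos (c * (w₂0 ^ 2 / 2 + 1) / a₁)]
  set θ : ℝ := (1 + δ) / (-c) with hθdef
  clear_value θ
  have hθpos : 0 < θ := by rw [hθdef]; exact div_pos (by linarith) (by linarith)
  have hθlt1 : θ < 1 := by
    rw [hθdef, div_lt_one (by linarith : (0:ℝ) < -c)]
    linarith
  set β' : ℝ := Real.arccos θ with hβ'def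
  clear_value β'
  have hβ'cos : Real.cos β' = θ := by
    rw [hβ'def]; exact Real.cos_arccos (by linarith) hθlt1.le
  have hβ'π : β' ≤ Real.pi := by rw [hβ'def]; exact Real.arccos_le_pi _
  have hβ'0 : 0 ≤ β' := by rw [hβ'def]; exact Real.arccos_nonneg _
  have hβ'lt : β' < βstar := by
    have h1 : Real.cos βstar < Real.cos β' := by
      rw [hβ'cos, hcosβ, hθdef, lt_div_iff₀ (by linarith : (0:ℝ) < -c)]
      have h2 : -(1 / c) * -c = 1 := by field_simp
      linarith
    exact (Real.strictAntiOn_cos.lt_iff_gt ⟨hβ0, hβπ⟩ ⟨hβ'0, hβ'π⟩).mp h1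
  -- pointwise helper lemmas
  have hcθ : c * θ = -(1 + δ) := by
    rw [hθdef, div_neg, mul_neg, mul_div_assoc']
    rw [mul_comm, mul_div_assoc, div_self hcne, mul_one]
  have hDlt : ∀ x : ℝ, θ < Real.cos x → 1 + c * Real.cos x < -δ := by
    intro x hx
    have h1 : c * Real.cos x < c * θ := mul_lt_mul_of_neg_left hx hc0
    linarith [hcθ]
  have hDle : ∀ x : ℝ, θ ≤ Real.cos x → 1 + c * Real.cos x ≤ -δ := by
    intro x hx
    have h1 : c * Real.cos x ≤ c * θ := mul_le_mul_of_nonpos_left hx hc0.le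
    linarith [hcθ]
  set Umin : ℝ := (a₁ / c) * Real.log (-(1 + c)) with hUmindef
  clear_value Umin
  have hUge : ∀ x : ℝ, 1 + c * Real.cos x < 0 →
      Umin ≤ (a₁ / c) * Real.log (1 + c * Real.cos x) := by
    intro x hD
    rw [hUmindef, ← Real.log_neg_eq_log (1 + c * Real.cos x)]
    apply mul_le_mul_of_nonpos_left _ hacneg.le
    apply Real.log_le_log (by linarith)
    have : c * 1 ≤ c * Real.cos x := mul_le_mul_of_nonpos_left (Real.cos_le_one _) hc0.le
    linarith
  have himp' : ∀ x : ℝ, 1 + c * Real.cos x < 0 →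
      (a₁ / c) * Real.log (1 + c * Real.cos x) < L → θ < Real.cos x := by
    intro x hD hU
    rw [← Real.log_neg_eq_log (1 + c * Real.cos x)] at hU
    have hca : c / a₁ < 0 := div_neg_of_neg_of_pos hc0 ha₁
    have hmul := mul_lt_mul_of_neg_left hU hca
    have heq : c / a₁ * (a₁ / c * Real.log (-(1 + c * Real.cos x)))
        = Real.log (-(1 + c * Real.cos x)) := by field_simp
    rw [heq] at hmul
    -- hmul : c / a₁ * L < log (-(D x))
    have h2 : δ < -(1 + c * Real.cos x) := by
      have hlog2 : c * L / a₁ < Real.log (-(1 + c * Real.cos x)) := by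
        calc c * L / a₁ = c / a₁ * L := by ring
          _ < Real.log (-(1 + c * Real.cos x)) := hmul
      have := Real.exp_lt_exp.mpr hlog2
      rw [Real.exp_log (by linarith : (0:ℝ) < -(1 + c * Real.cos x)), ← hδdef] at this
      exact this
    -- 1 + c cos x < -δ ⇒ cos x > θ
    by_contra hle
    push_neg at hle
    have := mul_le_mul_of_nonpos_left hle hc0.le
    linarith [hcθ]
  set Wb : ℝ := Real.sqrt (2 * (L - Umin)) with hWbdef
  clear_value Wb
  have hWb0 : 0 ≤ Wb := by rw [hWbdef]; exact Real.sqrt_nonneg _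
  have hWb : ∀ x w : ℝ, 1 + c * Real.cos x < 0 →
      w ^ 2 / 2 + (a₁ / c) * Real.log (1 + c * Real.cos x) < L → |w| ≤ Wb := by
    intro x w hD hV
    have hU := hUge x hD
    have hw2 : w ^ 2 ≤ 2 * (L - Umin) := by nlinarith
    rw [hWbdef]
    calc |w| = Real.sqrt (w ^ 2) := (Real.sqrt_sq_eq_abs w).symm
      _ ≤ Real.sqrt (2 * (L - Umin)) := Real.sqrt_le_sqrt hw2
  have hback : ∀ x : ℝ, |x| ≤ Real.pi → θ < Real.cos x → |x| < β' := by
    intro x hxπ hcos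
    have h1 : Real.cos β' < Real.cos |x| := by rw [Real.cos_abs, hβ'cos]; exact hcos
    exact (Real.strictAntiOn_cos.lt_iff_gt ⟨hβ'0, hβ'π⟩ ⟨abs_nonneg x, hxπ⟩).mp h1
  have hfwd : ∀ x : ℝ, |x| < β' → θ < Real.cos x := by
    intro x hx
    have h1 := Real.strictAntiOn_cos ⟨abs_nonneg x, by linarith⟩ ⟨hβ'0, hβ'π⟩ hx
    rw [Real.cos_abs, hβ'cos] at h1
    exact h1
  have hfwd_le : ∀ x : ℝ, |x| ≤ β' → θ ≤ Real.cos x := by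
    intro x hx
    rcases eq_or_lt_of_le hx with h | h
    · rw [← Real.cos_abs, h, hβ'cos]
    · exact (hfwd x h).le
  -- initial strictness
  have hU0L : (a₁ / c) * Real.log (1 + c * Real.cos w₁0) < L := by
    rw [← Real.log_neg_eq_log (1 + c * Real.cos w₁0), ← hU0def, hLdef]
    nlinarith [sq_nonneg w₂0]
  have hw₁0β' : |w₁0| < β' := hback w₁0 (by linarith) (himp' w₁0 hD0 hU0L)
  -- constants for the Gronwall bound
  set K : ℝ := Wb * ℓ₁ / δ with hKdef
  clear_value K
  have hK0 : 0 ≤ K := by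
    rw [hKdef]; exact div_nonneg (mul_nonneg hWb0 hℓ₁.le) hδpos.le
  refine ⟨max 1 (2 * K), lt_of_lt_of_le one_pos (le_max_left _ _), ?_⟩
  intro ℓ₂ hℓ₂ w₁ w₂ ε hw10 hw20 hε hd₁ hd₂
  have hℓ₂1 : (1:ℝ) ≤ ℓ₂ := le_trans (le_max_left _ _) hℓ₂
  have hℓ₂pos : (0:ℝ) < ℓ₂ := by linarith
  have hKℓ : K / ℓ₂ ≤ 1 / 2 := by
    rw [div_le_iff₀ hℓ₂pos]
    have := le_trans (le_max_right 1 (2 * K)) hℓ₂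
    linarith
  set V : ℝ → ℝ := fun t => (w₂ t) ^ 2 / 2 + (a₁ / c) * Real.log (1 + c * Real.cos (w₁ t))
    with hVdef
  clear_value V
  have hV0 : V 0 = L - 1 := by
    simp only [hVdef]
    rw [hw10, hw20]
    rw [← Real.log_neg_eq_log (1 + c * Real.cos w₁0), hLdef, hU0def]
    ring
  have hcontw₁ : ∀ t : ℝ, 0 ≤ t → ContinuousAt w₁ t := fun t ht => (hd₁ t ht).continuousAt
  have hcontw₂ : ∀ t : ℝ, 0 ≤ t → ContinuousAt w₂ t := fun t ht => (hd₂ t ht).continuousAt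
  have hcontV : ∀ t : ℝ, 0 ≤ t → 1 + c * Real.cos (w₁ t) ≠ 0 → ContinuousAt V t := by
    intro t ht hne
    simp only [hVdef]
    apply ContinuousAt.add
    · exact (((hcontw₂ t ht).pow 2).div_const 2)
    · apply ContinuousAt.mul continuousAt_const
      have hinner : ContinuousAt (fun s => 1 + c * Real.cos (w₁ s)) t := by
        exact continuousAt_const.add (continuousAt_const.mul
          (Real.continuous_cos.continuousAt.comp (hcontw₁ t ht)))
      exact ContinuousAt.comp (g := Real.log)
        (f := fun s => 1 + c * Real.cos (w₁ s)) (Real.continuousAt_log hne) hinner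
  -- the key invariance claim
  have key : ∀ t : ℝ, 0 ≤ t → |w₁ t| < β' ∧ V t < L := by
    by_contra hcon
    push_neg at hcon
    obtain ⟨t₀, ht₀, hbad⟩ := hcon
    set B : Set ℝ := {t | 0 ≤ t ∧ ¬(|w₁ t| < β' ∧ V t < L)} with hBdef
    have hBmem : ∀ t : ℝ, t ∈ B ↔ (0 ≤ t ∧ ¬(|w₁ t| < β' ∧ V t < L)) := by
      intro t; rw [hBdef]; rfl
    clear_value B
    have hBne : B.Nonempty := by
      refine ⟨t₀, (hBmem t₀).mpr ⟨ht₀, ?_⟩⟩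
      rintro ⟨h1, h2⟩
      exact absurd (hbad h1) (not_le.mpr h2)
    have hBbd : BddBelow B := ⟨0, fun x hx => ((hBmem x).mp hx).1⟩
    set T : ℝ := sInf B with hTdef
    clear_value T
    have hT0 : 0 ≤ T := by
      rw [hTdef]; exact le_csInf hBne fun x hx => ((hBmem x).mp hx).1
    have hTcl : T ∈ closure B := by rw [hTdef]; exact csInf_mem_closure hBne hBbd
    have hpre : ∀ s : ℝ, 0 ≤ s → s < T → |w₁ s| < β' ∧ V s < L := by
      intro s hs0 hsT
      by_contra h
      have hmem : s ∈ B := (hBmem s).mpr ⟨hs0, h⟩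
      have := csInf_le hBbd hmem
      rw [← hTdef] at this
      exact absurd this (not_le.mpr hsT)
    have hstrict : |w₁ T| < β' ∧ V T < L := by
      rcases eq_or_lt_of_le hT0 with h0' | hTpos
      · rw [← h0']
        constructor
        · rw [hw10]; exact hw₁0β'
        · rw [hV0]; linarith
      · -- T > 0 : closed bounds by limits
        have hw₁T : |w₁ T| ≤ β' := by
          have htd : Filter.Tendsto w₁ (nhdsWithin T (Set.Iio T)) (nhds (w₁ T)) :=
            (hcontw₁ T hT0).tendsto.mono_left nhdsWithin_le_nhds
          have hev : ∀ᶠ s in nhdsWithin T (Set.Iio T), w₁ s ∈ Set.Icc (-β') β' := by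
            filter_upwards [Ioo_mem_nhdsLT_of_mem (show T ∈ Set.Ioc 0 T from ⟨hTpos, le_refl T⟩)]
              with s hs
            have := (hpre s hs.1.le hs.2).1
            exact ⟨by linarith [(abs_lt.mp this).1], by linarith [(abs_lt.mp this).2]⟩
          have := isClosed_Icc.mem_of_tendsto htd hev
          exact abs_le.mpr ⟨this.1, this.2⟩
        have hcosT : θ ≤ Real.cos (w₁ T) := hfwd_le _ hw₁T
        have hDT : 1 + c * Real.cos (w₁ T) ≤ -δ := hDle _ hcosT
        have hDTneg : 1 + c * Real.cos (w₁ T) < 0 := by linarith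
        -- the comparison function Φ
        set Φ : ℝ → ℝ := fun t => V t + K / ℓ₂ * Real.exp (-ℓ₂ * t) with hΦdef
        clear_value Φ
        have hderiv : ∀ s ∈ Set.Ioo (0:ℝ) T,
            HasDerivAt Φ (w₂ s * ε s / (1 + c * Real.cos (w₁ s)) - K * Real.exp (-ℓ₂ * s)) s := by
          intro s hs
          have hs0 : (0:ℝ) ≤ s := hs.1.le
          have hstr := hpre s hs0 hs.2
          have hcoss := hfwd _ hstr.1
          have hDs : 1 + c * Real.cos (w₁ s) < -δ := hDlt _ hcoss
          have hDs0 : 1 + c * Real.cos (w₁ s) ≠ 0 := by intro h; rw [h] at hDs; linarith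
          have h₁ := hd₁ s hs0
          have h₂ := hd₂ s hs0
          have hsq : HasDerivAt (fun t => (w₂ t) ^ 2 / 2)
              (w₂ s * ((a₁ * Real.sin (w₁ s) + ε s) / (1 + c * Real.cos (w₁ s)))) s := by
            have h3 := (h₂.mul h₂).div_const 2
            have h4 : (fun t => (w₂ t) ^ 2 / 2) = fun t => w₂ t * w₂ t / 2 := by
              funext t; ring
            rw [h4]
            refine h3.congr_deriv ?_
            ring
          have hinner : HasDerivAt (fun t => 1 + c * Real.cos (w₁ t))
              (c * (-Real.sin (w₁ s) * w₂ s)) s := by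
            exact ((h₁.cos).const_mul c).const_add 1
          have hlog : HasDerivAt (fun t => Real.log (1 + c * Real.cos (w₁ t)))
              ((1 + c * Real.cos (w₁ s))⁻¹ * (c * (-Real.sin (w₁ s) * w₂ s))) s := by
            have := (Real.hasDerivAt_log hDs0).comp s hinner
            exact this
          have hVd : HasDerivAt V (w₂ s * ε s / (1 + c * Real.cos (w₁ s))) s := by
            simp only [hVdef]
            have := hsq.add (hlog.const_mul (a₁ / c))
            refine this.congr_deriv ?_
            field_simp
            ring
          have hexp : HasDerivAt (fun t => Real.exp (-ℓ₂ * t))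
              (Real.exp (-ℓ₂ * s) * -ℓ₂) s := by
            have h := (hasDerivAt_id s).const_mul (-ℓ₂)
            have := h.exp
            simpa using this
          have hΦd := hVd.add (hexp.const_mul (K / ℓ₂))
          simp only [hΦdef]
          refine hΦd.congr_deriv ?_
          field_simp
          ring
        have hnonpos : ∀ s ∈ Set.Ioo (0:ℝ) T,
            w₂ s * ε s / (1 + c * Real.cos (w₁ s)) - K * Real.exp (-ℓ₂ * s) ≤ 0 := by
          intro s hs
          have hs0 : (0:ℝ) ≤ s := hs.1.le
          have hstr := hpre s hs0 hs.2
          have hcoss := hfwd _ hstr.1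
          have hDs : 1 + c * Real.cos (w₁ s) < -δ := hDlt _ hcoss
          have hDsneg : 1 + c * Real.cos (w₁ s) < 0 := by linarith
          have hw2b : |w₂ s| ≤ Wb := by
            apply hWb (w₁ s) (w₂ s) hDsneg
            have h5 := hstr.2
            simp only [hVdef] at h5
            exact h5
          have hεb := hε s hs0
          have habs : |w₂ s * ε s / (1 + c * Real.cos (w₁ s))| ≤ K * Real.exp (-ℓ₂ * s) := by
            rw [abs_div, abs_mul]
            have hden : δ ≤ |1 + c * Real.cos (w₁ s)| := by
              rw [abs_of_neg hDsneg]; linarith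
            have hnum : |w₂ s| * |ε s| ≤ Wb * (ℓ₁ * Real.exp (-ℓ₂ * s)) := by
              apply mul_le_mul hw2b hεb (abs_nonneg _) hWb0
            calc |w₂ s| * |ε s| / |1 + c * Real.cos (w₁ s)|
                ≤ Wb * (ℓ₁ * Real.exp (-ℓ₂ * s)) / δ := by
                  apply div_le_div₀ (by positivity) hnum hδpos hden
              _ = K * Real.exp (-ℓ₂ * s) := by rw [hKdef]; field_simp
          have := le_abs_self (w₂ s * ε s / (1 + c * Real.cos (w₁ s)))
          linarith
        have hcontΦ : ContinuousOn Φ (Set.Icc 0 T) := by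
          intro s hs
          apply ContinuousAt.continuousWithinAt
          simp only [hΦdef]
          apply ContinuousAt.add
          · apply hcontV s hs.1
            rcases eq_or_lt_of_le hs.2 with h | h
            · rw [h]; intro hz; rw [hz] at hDT; linarith
            · have := hDlt _ (hfwd _ (hpre s hs.1 h).1)
              intro hz; rw [hz] at this; linarith
          · exact continuousAt_const.mul
              ((Real.continuous_exp.comp (continuous_const.mul continuous_id)).continuousAt)
        have hanti : AntitoneOn Φ (Set.Icc 0 T) := by
          apply antitoneOn_of_deriv_nonpos (convex_Icc 0 T) hcontΦ
          · intro s hs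
            rw [interior_Icc] at hs
            exact (hderiv s hs).differentiableAt.differentiableWithinAt
          · intro s hs
            rw [interior_Icc] at hs
            rw [(hderiv s hs).deriv]
            exact hnonpos s hs
        have hΦle : Φ T ≤ Φ 0 := hanti ⟨le_refl 0, hT0⟩ ⟨hT0, le_refl T⟩ hT0
        have hΦ0 : Φ 0 = L - 1 + K / ℓ₂ := by
          simp only [hΦdef]
          rw [hV0]
          norm_num
        have hexpT : 0 ≤ K / ℓ₂ * Real.exp (-ℓ₂ * T) := by positivity
        have hVT : V T < L := by
          have h1 : V T ≤ Φ T := by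
            simp only [hΦdef]
            have : 0 ≤ K / ℓ₂ * Real.exp (-ℓ₂ * T) := hexpT
            linarith
          rw [hΦ0] at hΦle
          linarith
        have hUTL : (a₁ / c) * Real.log (1 + c * Real.cos (w₁ T)) < L := by
          have h1 : 0 ≤ (w₂ T) ^ 2 / 2 := by positivity
          simp only [hVdef] at hVT
          linarith
        exact ⟨hback _ (by linarith) (himp' _ hDTneg hUTL), hVT⟩
    -- strictness at T is open, contradicting T ∈ closure B
    have hDTlt : 1 + c * Real.cos (w₁ T) < -δ := hDlt _ (hfwd _ hstrict.1)
    have hcontVT : ContinuousAt V T :=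
      hcontV T hT0 (by intro hz; rw [hz] at hDTlt; linarith)
    have hopen : ∀ᶠ s in nhds T, |w₁ s| < β' ∧ V s < L := by
      have h1 : ∀ᶠ s in nhds T, |w₁ s| < β' := by
        have hca : ContinuousAt (fun s => |w₁ s|) T := (hcontw₁ T hT0).abs
        exact hca (Iio_mem_nhds hstrict.1)
      have h2 : ∀ᶠ s in nhds T, V s < L := hcontVT (Iio_mem_nhds hstrict.2)
      exact h1.and h2
    obtain ⟨r, hr, hball⟩ := Metric.eventually_nhds_iff.mp hopen
    obtain ⟨b, hbB, hdist⟩ := Metric.mem_closure_iff.mp hTcl r hr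
    have := hball (show dist b T < r by rw [dist_comm] at hdist; exact hdist)
    exact ((hBmem b).mp hbB).2 this
  -- conclusion
  refine ⟨Wb, fun t ht => ?_⟩
  obtain ⟨h1, h2⟩ := key t ht
  have habs : |w₁ t| < βstar := lt_trans h1 hβ'lt
  refine ⟨⟨(abs_lt.mp habs).1, (abs_lt.mp habs).2⟩, ?_⟩
  have hDt : 1 + c * Real.cos (w₁ t) < 0 := by
    have := hDlt _ (hfwd _ h1); linarith
  apply hWb (w₁ t) (w₂ t) hDt
  simp only [hVdef] at h2
  exact h2
end

section
/- Let a₁ > 0, a₂ > 0, k < −1/a₂, β⋆ := arccos(−1/(k a₂)), and define the energy-like function H(w₁, w₂) := ½ w₂² + (a₁/(k a₂)) ln |1 + k a₂ cos(w₁)|. Then for all (w₁, w₂) with w₁ ∈ (−β⋆, β⋆): (i) H(w₁, w₂) ≥ H_min := (a₁/(k a₂)) ln(−1 − k a₂); (ii) ½ w₂² ≤ H(w₁, w₂) − H_min; and (iii) for any fixed w₂, H(w₁, w₂) → +∞ as |w₁| → β⋆. -/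
open Real

/-- properties of the energy-like function
`H (w₁, w₂) = ½ w₂² + (a₁/(k a₂)) ln |1 + k a₂ cos w₁|` on the strip
`w₁ ∈ (-βstar, βstar)` with `βstar = arccos (-1/(k a₂))`, `a₁, a₂ > 0`,
`k < -1/a₂`:
(i) `H ≥ Hmin := (a₁/(k a₂)) ln (-1 - k a₂)`;
(ii) `½ w₂² ≤ H - Hmin`;
(iii) for fixed `w₂`, `H → +∞` as `w₁ → ±βstar` from inside the strip. -/
theorem stmt7 (a₁ a₂ k : ℝ) (ha₁ : 0 < a₁) (ha₂ : 0 < a₂) (hk : k < -(1 / a₂))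
    (βstar : ℝ) (hβ : βstar = Real.arccos (-(1 / (k * a₂))))
    (H : ℝ → ℝ → ℝ)
    (hH : ∀ w₁ w₂, H w₁ w₂ =
      (1 / 2) * w₂ ^ 2 + (a₁ / (k * a₂)) * Real.log |1 + k * a₂ * Real.cos w₁|)
    (Hmin : ℝ) (hHmin : Hmin = (a₁ / (k * a₂)) * Real.log (-1 - k * a₂)) :
    (∀ w₁ w₂, w₁ ∈ Set.Ioo (-βstar) βstar → Hmin ≤ H w₁ w₂) ∧
    (∀ w₁ w₂, w₁ ∈ Set.Ioo (-βstar) βstar →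
      (1 / 2) * w₂ ^ 2 ≤ H w₁ w₂ - Hmin) ∧
    (∀ w₂, Filter.Tendsto (fun w₁ => H w₁ w₂)
        (nhdsWithin βstar (Set.Ioo (-βstar) βstar)) Filter.atTop ∧
      Filter.Tendsto (fun w₁ => H w₁ w₂)
        (nhdsWithin (-βstar) (Set.Ioo (-βstar) βstar)) Filter.atTop) := by
  set c : ℝ := k * a₂ with hcdef
  have hc : c < -1 := by
    have h1 : (1 / a₂) * a₂ = 1 := one_div_mul_cancel ha₂.ne'
    nlinarith [mul_lt_mul_of_pos_right hk ha₂]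
  have hc0 : c < 0 := by linarith
  have hcne : c ≠ 0 := ne_of_lt hc0
  have h1c : c * (1 / c) = 1 := mul_one_div_cancel hcne
  have hinv1 : -(1 / c) ≤ 1 := by nlinarith
  have hinv0 : -1 ≤ -(1 / c) := by nlinarith
  have hcosβ : Real.cos βstar = -(1 / c) := by
    rw [hβ]; exact Real.cos_arccos hinv0 hinv1
  have hβpi : βstar ≤ π := by rw [hβ]; exact Real.arccos_le_pi _
  -- cos is larger than cos βstar inside the strip
  have key : ∀ w₁ ∈ Set.Ioo (-βstar) βstar, -(1 / c) < Real.cos w₁ := by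
    intro w₁ hw
    have habs : |w₁| < βstar := abs_lt.2 ⟨hw.1, hw.2⟩
    have h := Real.cos_lt_cos_of_nonneg_of_le_pi (abs_nonneg w₁) hβpi habs
    rw [Real.cos_abs, hcosβ] at h
    exact h
  -- inside the strip the argument is negative and bounded
  have harg : ∀ w₁ ∈ Set.Ioo (-βstar) βstar,
      0 < -(1 + c * Real.cos w₁) ∧ -(1 + c * Real.cos w₁) ≤ -1 - c := by
    intro w₁ hw
    have h1 := key w₁ hw
    have h2 : Real.cos w₁ ≤ 1 := Real.cos_le_one w₁
    constructor
    · nlinarith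
    · nlinarith
  have hcoef : a₁ / c < 0 := div_neg_of_pos_of_neg ha₁ hc0
  -- the main pointwise bound
  have hmain : ∀ w₁ ∈ Set.Ioo (-βstar) βstar,
      (a₁ / c) * Real.log (-1 - c) ≤ (a₁ / c) * Real.log |1 + c * Real.cos w₁| := by
    intro w₁ hw
    obtain ⟨hpos, hle⟩ := harg w₁ hw
    have habs : |1 + c * Real.cos w₁| = -(1 + c * Real.cos w₁) :=
      abs_of_neg (by linarith)
    rw [habs]
    have hlog : Real.log (-(1 + c * Real.cos w₁)) ≤ Real.log (-1 - c) :=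
      Real.log_le_log hpos hle
    exact mul_le_mul_of_nonpos_left hlog (le_of_lt hcoef)
  refine ⟨?_, ?_, ?_⟩
  · intro w₁ w₂ hw
    rw [hH, hHmin]
    have := hmain w₁ hw
    nlinarith [sq_nonneg w₂]
  · intro w₁ w₂ hw
    rw [hH, hHmin]
    have := hmain w₁ hw
    linarith
  · intro w₂
    have hlim : ∀ p : ℝ, Real.cos p = -(1 / c) →
        Filter.Tendsto (fun w₁ => H w₁ w₂)
          (nhdsWithin p (Set.Ioo (-βstar) βstar)) Filter.atTop := by
      intro p hp
      have hg0 : (fun w₁ => -(1 + c * Real.cos w₁)) p = 0 := by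
        simp only [hp]; field_simp; norm_num
      have hgc : Filter.Tendsto (fun w₁ => -(1 + c * Real.cos w₁))
          (nhdsWithin p (Set.Ioo (-βstar) βstar)) (nhdsWithin 0 (Set.Ioi 0)) := by
        apply tendsto_nhdsWithin_of_tendsto_nhds_of_eventually_within
        · have hcont : Continuous (fun w₁ : ℝ => -(1 + c * Real.cos w₁)) := by continuity
          have h := hcont.tendsto p
          rw [show -(1 + c * Real.cos p) = 0 from by rw [hp]; field_simp; norm_num] at h
          exact h.mono_left nhdsWithin_le_nhds
        · filter_upwards [self_mem_nhdsWithin] with w₁ hw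
          exact (harg w₁ hw).1
      have hlog : Filter.Tendsto (fun w₁ => Real.log |1 + c * Real.cos w₁|)
          (nhdsWithin p (Set.Ioo (-βstar) βstar)) Filter.atBot := by
        have hcomp := Real.tendsto_log_nhdsGT_zero.comp hgc
        apply hcomp.congr'
        filter_upwards [self_mem_nhdsWithin] with w₁ hw
        have := (harg w₁ hw).1
        simp only [Function.comp]
        rw [abs_of_neg (by linarith : 1 + c * Real.cos w₁ < 0)]
      have hmul : Filter.Tendsto
          (fun w₁ => (a₁ / c) * Real.log |1 + c * Real.cos w₁|)
          (nhdsWithin p (Set.Ioo (-βstar) βstar)) Filter.atTop :=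
        (Filter.tendsto_const_mul_atTop_of_neg hcoef).2 hlog
      have := Filter.tendsto_atTop_add_const_left _ ((1 / 2) * w₂ ^ 2) hmul
      apply this.congr
      intro w₁
      rw [hH]
    constructor
    · exact hlim βstar hcosβ
    · exact hlim (-βstar) (by rw [Real.cos_neg]; exact hcosβ)
end

section
/- Let k₀, ℓ₁, ℓ₂ > 0 and v₀ ∈ ℝ, and suppose ℓ₂ > ℓ₀ := k₀ ℓ₁ exp(k₀ v₀). Then any differentiable function v : [0, ∞) → ℝ with v(0) = v₀ satisfying v̇(t) = ℓ₁ exp(k₀ v(t)) exp(−ℓ₂ t) is given explicitly by v(t) = −(1/k₀) ln[ exp(−k₀ v₀) + (k₀ ℓ₁/ℓ₂)(exp(−ℓ₂ t) − 1) ], is bounded with v(t) ≤ −(1/k₀) ln[ exp(−k₀ v₀) − k₀ ℓ₁/ℓ₂ ] for all t ≥ 0, and converges: lim_{t→∞} v(t) = −(1/k₀) ln[ exp(−k₀ v₀) − k₀ ℓ₁/ℓ₂ ]. -/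
/-- if `ℓ₂ > ℓ₀ = k₀ ℓ₁ exp (k₀ v₀)`, then any solution of
`v̇ = ℓ₁ e^{k₀ v} e^{-ℓ₂ t}` on `[0, ∞)` with `v 0 = v₀` is given explicitly by
`v t = -(1/k₀) ln (exp (-k₀ v₀) + (k₀ ℓ₁/ℓ₂)(exp (-ℓ₂ t) - 1))`, is bounded by
`-(1/k₀) ln (exp (-k₀ v₀) - k₀ ℓ₁/ℓ₂)`, and converges to that value. -/
theorem stmt10 (k₀ ℓ₁ ℓ₂ v₀ : ℝ) (hk₀ : 0 < k₀) (hℓ₁ : 0 < ℓ₁) (hℓ₂ : 0 < ℓ₂)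
    (hgap : k₀ * ℓ₁ * Real.exp (k₀ * v₀) < ℓ₂)
    (v : ℝ → ℝ) (hv0 : v 0 = v₀)
    (hv : ∀ t : ℝ, 0 ≤ t →
      HasDerivAt v (ℓ₁ * Real.exp (k₀ * v t) * Real.exp (-ℓ₂ * t)) t) :
    (∀ t : ℝ, 0 ≤ t →
      v t = -(1 / k₀) *
        Real.log (Real.exp (-k₀ * v₀) + (k₀ * ℓ₁ / ℓ₂) * (Real.exp (-ℓ₂ * t) - 1))) ∧
    (∀ t : ℝ, 0 ≤ t →
      v t ≤ -(1 / k₀) * Real.log (Real.exp (-k₀ * v₀) - k₀ * ℓ₁ / ℓ₂)) ∧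
    Filter.Tendsto v Filter.atTop
      (nhds (-(1 / k₀) * Real.log (Real.exp (-k₀ * v₀) - k₀ * ℓ₁ / ℓ₂))) := by
  obtain ⟨C, hCdef⟩ : ∃ C : ℝ, C = Real.exp (-k₀ * v₀) - k₀ * ℓ₁ / ℓ₂ := ⟨_, rfl⟩
  have hC : 0 < C := by
    have he := Real.exp_pos (k₀ * v₀)
    have h1 : Real.exp (-k₀ * v₀) * Real.exp (k₀ * v₀) = 1 := by
      rw [← Real.exp_add]; ring_nf; exact Real.exp_zero
    have h2 : k₀ * ℓ₁ / ℓ₂ < Real.exp (-k₀ * v₀) := by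
      rw [div_lt_iff₀ hℓ₂]
      nlinarith
    rw [hCdef]; linarith
  have hw' : ∀ t : ℝ, 0 ≤ t → HasDerivAt
      (fun s => Real.exp (-k₀ * v s) - (k₀ * ℓ₁ / ℓ₂) * Real.exp (-ℓ₂ * s)) 0 t := by
    intro t ht
    have h1 : HasDerivAt (fun s => Real.exp (-k₀ * v s))
        (Real.exp (-k₀ * v t) * (-k₀ * (ℓ₁ * Real.exp (k₀ * v t) * Real.exp (-ℓ₂ * t)))) t :=
      (((hv t ht).const_mul (-k₀)).exp)
    have h2 : HasDerivAt (fun s => (k₀ * ℓ₁ / ℓ₂) * Real.exp (-ℓ₂ * s))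
        ((k₀ * ℓ₁ / ℓ₂) * (Real.exp (-ℓ₂ * t) * (-ℓ₂))) t := by
      have := (((hasDerivAt_id t).const_mul (-ℓ₂)).exp).const_mul (k₀ * ℓ₁ / ℓ₂)
      simpa using this
    have h3 := h1.sub h2
    have hek : Real.exp (-k₀ * v t) * Real.exp (k₀ * v t) = 1 := by
      rw [← Real.exp_add]; ring_nf; exact Real.exp_zero
    have hfirst : Real.exp (-k₀ * v t) * (-k₀ * (ℓ₁ * Real.exp (k₀ * v t) * Real.exp (-ℓ₂ * t)))
        = -(k₀ * ℓ₁ * Real.exp (-ℓ₂ * t)) := by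
      linear_combination (-(k₀ * ℓ₁ * Real.exp (-ℓ₂ * t))) * hek
    have hsecond : (k₀ * ℓ₁ / ℓ₂) * (Real.exp (-ℓ₂ * t) * (-ℓ₂))
        = -(k₀ * ℓ₁ * Real.exp (-ℓ₂ * t)) := by
      field_simp
    rw [hfirst, hsecond, sub_self] at h3
    exact h3
  have hA : ∀ t : ℝ, 0 ≤ t →
      Real.exp (-k₀ * v t) = C + (k₀ * ℓ₁ / ℓ₂) * Real.exp (-ℓ₂ * t) := by
    intro t ht
    have hcont : ContinuousOn
        (fun s => Real.exp (-k₀ * v s) - (k₀ * ℓ₁ / ℓ₂) * Real.exp (-ℓ₂ * s))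
        (Set.Icc 0 t) := fun x hx => ((hw' x hx.1).continuousAt).continuousWithinAt
    have hderiv : ∀ x ∈ Set.Ico (0:ℝ) t, HasDerivWithinAt
        (fun s => Real.exp (-k₀ * v s) - (k₀ * ℓ₁ / ℓ₂) * Real.exp (-ℓ₂ * s))
        0 (Set.Ici x) x := fun x hx => (hw' x hx.1).hasDerivWithinAt
    have hconst := constant_of_has_deriv_right_zero hcont hderiv t
      (Set.mem_Icc.2 ⟨ht, le_refl t⟩)
    simp only [hv0, mul_zero, neg_zero, Real.exp_zero, mul_one] at hconst
    rw [hCdef]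
    linarith [hconst]
  have hApos : ∀ t : ℝ, 0 < C + (k₀ * ℓ₁ / ℓ₂) * Real.exp (-ℓ₂ * t) := by
    intro t
    have h1 : (0:ℝ) < (k₀ * ℓ₁ / ℓ₂) * Real.exp (-ℓ₂ * t) :=
      mul_pos (by positivity) (Real.exp_pos _)
    linarith
  have hform : ∀ t : ℝ, 0 ≤ t →
      v t = -(1 / k₀) * Real.log (C + (k₀ * ℓ₁ / ℓ₂) * Real.exp (-ℓ₂ * t)) := by
    intro t ht
    have h := hA t ht
    have hlog : -k₀ * v t = Real.log (C + (k₀ * ℓ₁ / ℓ₂) * Real.exp (-ℓ₂ * t)) := by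
      rw [← h, Real.log_exp]
    have hk : k₀ ≠ 0 := ne_of_gt hk₀
    rw [← hlog]
    field_simp
  have hrewrite : ∀ t : ℝ,
      Real.exp (-k₀ * v₀) + (k₀ * ℓ₁ / ℓ₂) * (Real.exp (-ℓ₂ * t) - 1)
        = C + (k₀ * ℓ₁ / ℓ₂) * Real.exp (-ℓ₂ * t) := by
    intro t; rw [hCdef]; ring
  refine ⟨?_, ?_, ?_⟩
  · intro t ht
    rw [hrewrite t]
    exact hform t ht
  · intro t ht
    rw [hform t ht, ← hCdef]
    have hle : Real.log C ≤ Real.log (C + (k₀ * ℓ₁ / ℓ₂) * Real.exp (-ℓ₂ * t)) := by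
      apply Real.log_le_log hC
      have : (0:ℝ) < (k₀ * ℓ₁ / ℓ₂) * Real.exp (-ℓ₂ * t) :=
        mul_pos (by positivity) (Real.exp_pos _)
      linarith
    have hneg : -(1 / k₀) ≤ 0 := by
      have : (0:ℝ) < 1 / k₀ := by positivity
      linarith
    exact mul_le_mul_of_nonpos_left hle hneg
  · rw [← hCdef]
    have hlim : Filter.Tendsto (fun t : ℝ =>
        -(1 / k₀) * Real.log (C + (k₀ * ℓ₁ / ℓ₂) * Real.exp (-ℓ₂ * t)))
        Filter.atTop (nhds (-(1 / k₀) * Real.log C)) := by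
      have h1 : Filter.Tendsto (fun t : ℝ => -ℓ₂ * t) Filter.atTop Filter.atBot :=
        Filter.Tendsto.const_mul_atTop_of_neg (by linarith) Filter.tendsto_id
      have h2 : Filter.Tendsto (fun t : ℝ => Real.exp (-ℓ₂ * t)) Filter.atTop (nhds 0) :=
        Real.tendsto_exp_atBot.comp h1
      have h3 : Filter.Tendsto (fun t : ℝ => C + (k₀ * ℓ₁ / ℓ₂) * Real.exp (-ℓ₂ * t))
          Filter.atTop (nhds C) := by
        have := (h2.const_mul (k₀ * ℓ₁ / ℓ₂)).const_add C
        simpa using this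
      have h4 : Filter.Tendsto (fun t : ℝ =>
          Real.log (C + (k₀ * ℓ₁ / ℓ₂) * Real.exp (-ℓ₂ * t)))
          Filter.atTop (nhds (Real.log C)) :=
        ((Real.continuousAt_log (ne_of_gt hC)).tendsto).comp h3
      exact h4.const_mul _
    apply hlim.congr'
    filter_upwards [Filter.eventually_ge_atTop (0:ℝ)] with t ht
    exact (hform t ht).symm
end

section
/- Let k₀, ℓ₁, ℓ₂ > 0, v₀ ∈ ℝ and ℓ₀ := k₀ ℓ₁ exp(k₀ v₀), and consider solutions of v̇ = ℓ₁ exp(k₀ v) exp(−ℓ₂ t) with v(0) = v₀. (i) If ℓ₂ = ℓ₀, the solution exists on all of [0, ∞), satisfies exp(−k₀ v(t)) = exp(−k₀ v₀) exp(−ℓ₂ t), and hence v(t) → +∞ as t → ∞. (ii) If ℓ₂ < ℓ₀, the solution has finite escape time: it exists only on a maximal interval [0, t⋆) with t⋆ = −(1/ℓ₂) ln(1 − ℓ₂ exp(−k₀ v₀)/(k₀ ℓ₁)) < ∞, and v(t) → +∞ as t → t⋆. -/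
/-- A solution of `v̇ = ℓ₁ e^{k₀ v} e^{-ℓ₂ t}` on `[0, T)` with `v 0 = v₀`. -/
def IsSolOn (k₀ ℓ₁ ℓ₂ v₀ T : ℝ) (v : ℝ → ℝ) : Prop :=
  v 0 = v₀ ∧
    ∀ t : ℝ, 0 ≤ t → t < T →
      HasDerivAt v (ℓ₁ * Real.exp (k₀ * v t) * Real.exp (-ℓ₂ * t)) t

/-- A global solution of `v̇ = ℓ₁ e^{k₀ v} e^{-ℓ₂ t}` on `[0, ∞)` with `v 0 = v₀`. -/
def IsSolGlobal (k₀ ℓ₁ ℓ₂ v₀ : ℝ) (v : ℝ → ℝ) : Prop :=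
  v 0 = v₀ ∧
    ∀ t : ℝ, 0 ≤ t →
      HasDerivAt v (ℓ₁ * Real.exp (k₀ * v t) * Real.exp (-ℓ₂ * t)) t

lemma exp_mul_exp_neg (x : ℝ) : Real.exp x * Real.exp (-x) = 1 := by
  rw [← Real.exp_add, add_neg_cancel, Real.exp_zero]

lemma exp_sol_deriv {k₀ ℓ₁ ℓ₂ : ℝ} {v : ℝ → ℝ} {t : ℝ}
    (hv : HasDerivAt v (ℓ₁ * Real.exp (k₀ * v t) * Real.exp (-ℓ₂ * t)) t) :
    HasDerivAt (fun s => Real.exp (-k₀ * v s)) (-(k₀ * ℓ₁) * Real.exp (-ℓ₂ * t)) t := by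
  have h := (hv.const_mul (-k₀)).exp
  convert h using 1
  have h1 : Real.exp (-k₀ * v t) * Real.exp (k₀ * v t) = 1 := by
    rw [← Real.exp_add, show -k₀ * v t + k₀ * v t = 0 by ring, Real.exp_zero]
  linear_combination (k₀ * ℓ₁ * Real.exp (-ℓ₂ * t)) * h1

lemma w_deriv (a c ℓ₂ t : ℝ) :
    HasDerivAt (fun s => a + c * (Real.exp (-ℓ₂ * s) - 1)) (-(c * ℓ₂) * Real.exp (-ℓ₂ * t)) t := by
  have h1 : HasDerivAt (fun s : ℝ => -ℓ₂ * s) (-ℓ₂) t := by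
    simpa using (hasDerivAt_id t).const_mul (-ℓ₂)
  have := (((h1.exp.sub_const 1).const_mul c).const_add a)
  rw [show -(c * ℓ₂) * Real.exp (-ℓ₂ * t) = c * (Real.exp (-ℓ₂ * t) * -ℓ₂) by ring]
  exact this

lemma sol_key {k₀ ℓ₁ ℓ₂ v₀ T : ℝ} (hℓ₂ : ℓ₂ ≠ 0) {v : ℝ → ℝ}
    (hsol : IsSolOn k₀ ℓ₁ ℓ₂ v₀ T v) {t : ℝ} (ht0 : 0 ≤ t) (htT : t < T) :
    Real.exp (-k₀ * v t)
      = Real.exp (-k₀ * v₀) + (k₀ * ℓ₁ / ℓ₂) * (Real.exp (-ℓ₂ * t) - 1) := by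
  obtain ⟨h0, hv⟩ := hsol
  set g : ℝ → ℝ := fun s => Real.exp (-k₀ * v s)
    - (Real.exp (-k₀ * v₀) + (k₀ * ℓ₁ / ℓ₂) * (Real.exp (-ℓ₂ * s) - 1)) with hg
  have hderiv : ∀ s ∈ Set.Icc (0:ℝ) t, HasDerivAt g 0 s := by
    intro s hs
    have hsT : s < T := lt_of_le_of_lt hs.2 htT
    have h1 := exp_sol_deriv (hv s hs.1 hsT)
    have h2 := w_deriv (Real.exp (-k₀ * v₀)) (k₀ * ℓ₁ / ℓ₂) ℓ₂ s
    have h3 := h1.sub h2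
    rw [show (0:ℝ) = -(k₀ * ℓ₁) * Real.exp (-ℓ₂ * s) - -(k₀ * ℓ₁ / ℓ₂ * ℓ₂) * Real.exp (-ℓ₂ * s) by
      rw [div_mul_cancel₀ _ hℓ₂]; ring]
    exact h3
  have hcont : ContinuousOn g (Set.Icc 0 t) :=
    fun s hs => ((hderiv s hs).continuousAt).continuousWithinAt
  have hc := constant_of_has_deriv_right_zero hcont
    (fun s hs => ((hderiv s (Set.Ico_subset_Icc_self hs)).hasDerivWithinAt))
  have hgt := hc t (Set.right_mem_Icc.2 ht0)
  have hg0 : g 0 = 0 := by simp [hg, h0]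
  have hgt0 : g t = 0 := hgt.trans hg0
  have := sub_eq_zero.mp hgt0
  linarith [this]

/-- behaviour of `v̇ = ℓ₁ e^{k₀ v} e^{-ℓ₂ t}`, `v 0 = v₀`, with
`ℓ₀ := k₀ ℓ₁ exp (k₀ v₀)`.
(i) If `ℓ₂ = ℓ₀`, a global solution on `[0, ∞)` exists, every global solution
satisfies `exp (-k₀ v t) = exp (-k₀ v₀) exp (-ℓ₂ t)` (hence
`v t = v₀ + (ℓ₂/k₀) t`) and `v t → +∞` as `t → ∞`.
(ii) If `ℓ₂ < ℓ₀`, solutions only exist on the maximal interval `[0, t⋆)` with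
`t⋆ = -(1/ℓ₂) ln (1 - ℓ₂ exp (-k₀ v₀)/(k₀ ℓ₁)) < ∞`: a solution on `[0, t⋆)`
exists, no solution exists on any larger interval `[0, T)` with `T > t⋆`, and
every solution on `[0, t⋆)` blows up: `v t → +∞` as `t → t⋆⁻`. -/
theorem stmt11 (k₀ ℓ₁ ℓ₂ v₀ : ℝ) (hk₀ : 0 < k₀) (hℓ₁ : 0 < ℓ₁) (hℓ₂ : 0 < ℓ₂)
    (ℓ₀ : ℝ) (hℓ₀ : ℓ₀ = k₀ * ℓ₁ * Real.exp (k₀ * v₀)) :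
    (ℓ₂ = ℓ₀ →
      (∃ v : ℝ → ℝ, IsSolGlobal k₀ ℓ₁ ℓ₂ v₀ v) ∧
      ∀ v : ℝ → ℝ, IsSolGlobal k₀ ℓ₁ ℓ₂ v₀ v →
        (∀ t : ℝ, 0 ≤ t →
          Real.exp (-k₀ * v t) = Real.exp (-k₀ * v₀) * Real.exp (-ℓ₂ * t)) ∧
        Filter.Tendsto v Filter.atTop Filter.atTop) ∧
    (ℓ₂ < ℓ₀ →
      ∀ tstar : ℝ,
        tstar = -(1 / ℓ₂) * Real.log (1 - ℓ₂ * Real.exp (-k₀ * v₀) / (k₀ * ℓ₁)) →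
        0 < tstar ∧
        (∃ v : ℝ → ℝ, IsSolOn k₀ ℓ₁ ℓ₂ v₀ tstar v) ∧
        (∀ T : ℝ, tstar < T → ¬ ∃ v : ℝ → ℝ, IsSolOn k₀ ℓ₁ ℓ₂ v₀ T v) ∧
        (∀ v : ℝ → ℝ, IsSolOn k₀ ℓ₁ ℓ₂ v₀ tstar v →
          Filter.Tendsto v (nhdsWithin tstar (Set.Iio tstar)) Filter.atTop)) := by
  have hk₀' : k₀ ≠ 0 := ne_of_gt hk₀
  have hℓ₂' : ℓ₂ ≠ 0 := ne_of_gt hℓ₂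
  have hprod : Real.exp (-k₀ * v₀) * Real.exp (k₀ * v₀) = 1 := by
    rw [← Real.exp_add, show -k₀ * v₀ + k₀ * v₀ = 0 by ring, Real.exp_zero]
  constructor
  · -- case (i)
    intro heq
    have h2 : ℓ₂ = k₀ * ℓ₁ * Real.exp (k₀ * v₀) := heq.trans hℓ₀
    have hc : k₀ * ℓ₁ / ℓ₂ = Real.exp (-k₀ * v₀) := by
      rw [h2, eq_comm, eq_div_iff (by positivity)]
      linear_combination k₀ * ℓ₁ * hprod
    constructor
    · refine ⟨fun t => v₀ + (ℓ₂ / k₀) * t, by simp, fun t ht => ?_⟩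
      have h : HasDerivAt (fun t : ℝ => v₀ + (ℓ₂ / k₀) * t) (ℓ₂ / k₀) t := by
        simpa using ((hasDerivAt_id t).const_mul (ℓ₂ / k₀)).const_add v₀
      show HasDerivAt (fun t : ℝ => v₀ + ℓ₂ / k₀ * t)
          (ℓ₁ * Real.exp (k₀ * (v₀ + ℓ₂ / k₀ * t)) * Real.exp (-ℓ₂ * t)) t
      have hval : ℓ₁ * Real.exp (k₀ * (v₀ + ℓ₂ / k₀ * t)) * Real.exp (-ℓ₂ * t)
          = ℓ₂ / k₀ := by
        rw [show k₀ * (v₀ + ℓ₂ / k₀ * t) = k₀ * v₀ + ℓ₂ * t by field_simp,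
          Real.exp_add, eq_div_iff hk₀']
        have h1 : Real.exp (ℓ₂ * t) * Real.exp (-ℓ₂ * t) = 1 := by
          rw [← Real.exp_add, show ℓ₂ * t + -ℓ₂ * t = 0 by ring, Real.exp_zero]
        linear_combination (k₀ * ℓ₁ * Real.exp (k₀ * v₀)) * h1 - h2
      rw [hval]; exact h
    · intro v hsol
      have key : ∀ t : ℝ, 0 ≤ t →
          Real.exp (-k₀ * v t) = Real.exp (-k₀ * v₀) * Real.exp (-ℓ₂ * t) := by
        intro t ht
        have hon : IsSolOn k₀ ℓ₁ ℓ₂ v₀ (t + 1) v :=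
          ⟨hsol.1, fun s hs _ => hsol.2 s hs⟩
        have := sol_key hℓ₂' hon ht (by linarith)
        rw [this, hc]; ring
      refine ⟨key, ?_⟩
      have hlin : ∀ t : ℝ, 0 ≤ t → v t = v₀ + (ℓ₂ / k₀) * t := by
        intro t ht
        have h := key t ht
        rw [← Real.exp_add] at h
        have h3 := Real.exp_injective h
        field_simp
        linarith [h3]
      have h1 : Filter.Tendsto (fun t : ℝ => v₀ + (ℓ₂ / k₀) * t)
          Filter.atTop Filter.atTop := by
        apply Filter.tendsto_atTop_add_const_left
        exact (Filter.tendsto_id.const_mul_atTop (div_pos hℓ₂ hk₀))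
      refine Filter.Tendsto.congr' ?_ h1
      filter_upwards [Filter.eventually_ge_atTop (0:ℝ)] with t ht
      exact (hlin t ht).symm
  · -- case (ii)
    intro hlt tstar htstar
    rw [hℓ₀] at hlt
    obtain ⟨a, ha_def⟩ : ∃ a, a = Real.exp (-k₀ * v₀) := ⟨_, rfl⟩
    obtain ⟨c, hc_def⟩ : ∃ c, c = k₀ * ℓ₁ / ℓ₂ := ⟨_, rfl⟩
    rw [← ha_def] at htstar
    have ha : 0 < a := ha_def ▸ Real.exp_pos _
    have hcpos : 0 < c := hc_def ▸ div_pos (mul_pos hk₀ hℓ₁) hℓ₂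
    have hac : a < c := by
      rw [ha_def, hc_def, lt_div_iff₀ hℓ₂]
      calc Real.exp (-k₀ * v₀) * ℓ₂
          < Real.exp (-k₀ * v₀) * (k₀ * ℓ₁ * Real.exp (k₀ * v₀)) :=
            mul_lt_mul_of_pos_left hlt (Real.exp_pos _)
        _ = k₀ * ℓ₁ := by linear_combination k₀ * ℓ₁ * hprod
    obtain ⟨r, hr_def⟩ : ∃ r, r = 1 - ℓ₂ * a / (k₀ * ℓ₁) := ⟨_, rfl⟩
    rw [← hr_def] at htstar
    have hra : r = 1 - a / c := by rw [hr_def, hc_def]; field_simp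
    have hr0 : 0 < r := by
      rw [hra]; exact sub_pos.mpr ((div_lt_one hcpos).mpr hac)
    have hr1 : r < 1 := by
      rw [hra]; have : 0 < a / c := div_pos ha hcpos; linarith
    have hlogr : Real.log r < 0 := Real.log_neg hr0 hr1
    have htpos : 0 < tstar := by
      rw [htstar]
      nlinarith [mul_pos (div_pos one_pos hℓ₂) (neg_pos.mpr hlogr)]
    have hexp : Real.exp (-ℓ₂ * tstar) = r := by
      rw [htstar, show -ℓ₂ * (-(1 / ℓ₂) * Real.log r) = Real.log r by field_simp,
        Real.exp_log hr0]
    set w : ℝ → ℝ := fun t => a + c * (Real.exp (-ℓ₂ * t) - 1) with hw_def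
    have hw0 : w 0 = a := by simp [hw_def]
    have hca : c * (r - 1) = -a := by rw [hra]; field_simp; ring
    have hwstar : w tstar = 0 := by
      simp only [hw_def, hexp]; linarith [hca]
    have hwpos : ∀ t : ℝ, t < tstar → 0 < w t := by
      intro t ht
      have hgt : r < Real.exp (-ℓ₂ * t) := by
        rw [← hexp]
        exact Real.exp_lt_exp.mpr (by nlinarith)
      simp only [hw_def]
      nlinarith
    refine ⟨htpos, ?_, ?_, ?_⟩
    · -- existence on [0, tstar)
      refine ⟨fun t => -(1 / k₀) * Real.log (w t), ?_, ?_⟩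
      · show -(1 / k₀) * Real.log (w 0) = v₀
        rw [hw0, ha_def, Real.log_exp]
        field_simp
      · intro t ht0 ht
        have hwt' : 0 < a + c * (Real.exp (-ℓ₂ * t) - 1) := hwpos t ht
        have hd := ((w_deriv a c ℓ₂ t).log (ne_of_gt hwt')).const_mul (-(1 / k₀))
        have hexpv :
            Real.exp (k₀ * (-(1 / k₀) * Real.log (a + c * (Real.exp (-ℓ₂ * t) - 1))))
              = (a + c * (Real.exp (-ℓ₂ * t) - 1))⁻¹ := by
          rw [show k₀ * (-(1 / k₀) * Real.log (a + c * (Real.exp (-ℓ₂ * t) - 1)))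
              = -Real.log (a + c * (Real.exp (-ℓ₂ * t) - 1)) by field_simp,
            Real.exp_neg, Real.exp_log hwt']
        have hval :
            ℓ₁ * Real.exp (k₀ * (-(1 / k₀) * Real.log (a + c * (Real.exp (-ℓ₂ * t) - 1))))
                * Real.exp (-ℓ₂ * t)
              = -(1 / k₀) * (-(c * ℓ₂) * Real.exp (-ℓ₂ * t)
                  / (a + c * (Real.exp (-ℓ₂ * t) - 1))) := by
          have hcl2 : c * ℓ₂ / k₀ = ℓ₁ := by rw [hc_def]; field_simp
          have hrw : -(1 / k₀) * (-(c * ℓ₂) * Real.exp (-ℓ₂ * t)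
                  / (a + c * (Real.exp (-ℓ₂ * t) - 1)))
              = c * ℓ₂ / k₀ * (Real.exp (-ℓ₂ * t)
                  * (a + c * (Real.exp (-ℓ₂ * t) - 1))⁻¹) := by ring
          rw [hexpv, hrw, hcl2]
          ring
        show HasDerivAt (fun s => -(1 / k₀) * Real.log (a + c * (Real.exp (-ℓ₂ * s) - 1)))
            (ℓ₁ * Real.exp (k₀ * (-(1 / k₀) * Real.log (a + c * (Real.exp (-ℓ₂ * t) - 1))))
              * Real.exp (-ℓ₂ * t)) t
        rw [hval]; exact hd
    · -- no solution on a larger interval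
      rintro T hT ⟨v, hsol⟩
      have h := sol_key hℓ₂' hsol (le_of_lt htpos) hT
      rw [← ha_def, ← hc_def] at h
      have h2 : Real.exp (-k₀ * v tstar) = w tstar := h
      rw [hwstar] at h2
      exact absurd h2 (ne_of_gt (Real.exp_pos _))
    · -- blow-up
      intro v hsol
      have key : ∀ t : ℝ, 0 ≤ t → t < tstar → v t = (1 / k₀) * (-Real.log (w t)) := by
        intro t ht0 ht
        have h := sol_key hℓ₂' hsol ht0 ht
        rw [← ha_def, ← hc_def] at h
        have h2 : Real.log (Real.exp (-k₀ * v t)) = Real.log (w t) := by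
          rw [h]
        rw [Real.log_exp] at h2
        field_simp
        linarith [h2]
      have hcw : Continuous w := by fun_prop
      have h1 : Filter.Tendsto w (nhdsWithin tstar (Set.Iio tstar)) (nhds (w tstar)) :=
        hcw.continuousWithinAt
      rw [hwstar] at h1
      have hwc : Filter.Tendsto w (nhdsWithin tstar (Set.Iio tstar))
          (nhdsWithin 0 (Set.Ioi 0)) := by
        apply tendsto_nhdsWithin_of_tendsto_nhds_of_eventually_within _ h1
        filter_upwards [self_mem_nhdsWithin] with t ht
        exact hwpos t ht
      have hlog : Filter.Tendsto (fun t => -Real.log (w t))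
          (nhdsWithin tstar (Set.Iio tstar)) Filter.atTop :=
        Filter.tendsto_neg_atBot_atTop.comp
          (Real.tendsto_log_nhdsGT_zero.comp hwc)
      have hf : Filter.Tendsto (fun t => (1 / k₀) * (-Real.log (w t)))
          (nhdsWithin tstar (Set.Iio tstar)) Filter.atTop :=
        hlog.const_mul_atTop (by positivity)
      refine Filter.Tendsto.congr' ?_ hf
      have h0ev : ∀ᶠ t in nhdsWithin tstar (Set.Iio tstar), 0 ≤ t :=
        Filter.Eventually.filter_mono nhdsWithin_le_nhds
          ((eventually_gt_nhds htpos).mono fun t ht => ht.le)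
      filter_upwards [h0ev, self_mem_nhdsWithin] with t ht0 ht
      exact (key t ht0 ht).symm
end

section
/- (Inertia wheel pendulum invariance) Let m > 0, b > 0, let k ≠ −1/b, and set a := −m/(1 + bk). Let ξ₁, ξ₂ : ℝ → ℝ be differentiable functions satisfying the target pendulum dynamics ξ̇₁ = ξ₂, ξ̇₂ = −a sin(ξ₁). Then the curve x(t) := (ξ₁(t), k ξ₁(t), ξ₂(t), k ξ₂(t)) together with the input u(t) := −a k sin(ξ₁(t)) satisfies the inertia wheel pendulum equations ẋ₁ = x₃, ẋ₂ = x₄, ẋ₃ = m sin(x₁) − b u, ẋ₄ = u for all t. -/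
/-- Inertia wheel pendulum invariance: with `m, b > 0`,
`k ≠ -1/b` and `a = -m/(1 + b k)`, any solution `(ξ₁, ξ₂)` of the target
pendulum `ξ̇₁ = ξ₂`, `ξ̇₂ = -a sin ξ₁`, mapped through
`π(ξ) = (ξ₁, k ξ₁, ξ₂, k ξ₂)` and driven by the input `u = -a k sin ξ₁`,
solves the inertia wheel pendulum equations
`ẋ₁ = x₃`, `ẋ₂ = x₄`, `ẋ₃ = m sin x₁ - b u`, `ẋ₄ = u`. -/
theorem stmt14 (m b k a : ℝ) (hm : 0 < m) (hb : 0 < b) (hk : k ≠ -(1 / b))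
    (ha : a = -m / (1 + b * k))
    (ξ₁ ξ₂ : ℝ → ℝ)
    (hξ₁ : ∀ t, HasDerivAt ξ₁ (ξ₂ t) t)
    (hξ₂ : ∀ t, HasDerivAt ξ₂ (-a * Real.sin (ξ₁ t)) t)
    (x₁ x₂ x₃ x₄ u : ℝ → ℝ)
    (hx₁ : ∀ t, x₁ t = ξ₁ t) (hx₂ : ∀ t, x₂ t = k * ξ₁ t)
    (hx₃ : ∀ t, x₃ t = ξ₂ t) (hx₄ : ∀ t, x₄ t = k * ξ₂ t)
    (hu : ∀ t, u t = -a * k * Real.sin (ξ₁ t)) :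
    ∀ t,
      HasDerivAt x₁ (x₃ t) t ∧
      HasDerivAt x₂ (x₄ t) t ∧
      HasDerivAt x₃ (m * Real.sin (x₁ t) - b * u t) t ∧
      HasDerivAt x₄ (u t) t := by
  have hden : 1 + b * k ≠ 0 := by
    intro h
    apply hk
    field_simp
    linarith
  have key : m + a * b * k = -a := by
    have : a * (1 + b * k) = -m := by
      rw [ha]; field_simp
    nlinarith [this]
  intro t
  refine ⟨?_, ?_, ?_, ?_⟩
  · have := hξ₁ t
    rw [hx₃ t]
    exact this.congr_of_eventuallyEq (Filter.Eventually.of_forall fun s => hx₁ s)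
  · have := (hξ₁ t).const_mul k
    rw [hx₄ t]
    exact this.congr_of_eventuallyEq (Filter.Eventually.of_forall fun s => (hx₂ s))
  · have := hξ₂ t
    have h2 : m * Real.sin (x₁ t) - b * u t = -a * Real.sin (ξ₁ t) := by
      rw [hx₁, hu]; ring_nf; nlinarith [key, Real.sin_le_one (ξ₁ t)]
    rw [h2]
    exact this.congr_of_eventuallyEq (Filter.Eventually.of_forall fun s => (hx₃ s))
  · have := (hξ₂ t).const_mul k
    have h2 : u t = k * (-a * Real.sin (ξ₁ t)) := by rw [hu]; ring
    rw [h2]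
    exact this.congr_of_eventuallyEq (Filter.Eventually.of_forall fun s => (hx₄ s))
end

section
/- (Cart-pendulum invariance) Let a₁ > 0, a₂ > 0 and k ∈ ℝ. Let ξ₁, ξ₂ : I → ℝ be differentiable functions on an interval I satisfying ξ̇₁ = ξ₂ and ξ̇₂ = a₁ sin(ξ₁)/(1 + k a₂ cos(ξ₁)), where 1 + k a₂ cos(ξ₁(t)) ≠ 0 on I. Then the curve x(t) := (ξ₁(t), k ξ₁(t), ξ₂(t), k ξ₂(t)) together with the input u(t) := k a₁ sin(ξ₁(t))/(1 + k a₂ cos(ξ₁(t))) satisfies the cart-pendulum equations ẋ₁ = x₃, ẋ₂ = x₄, ẋ₃ = a₁ sin(x₁) − a₂ cos(x₁) u, ẋ₄ = u on I. -/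
/-- Cart-pendulum invariance: with `a₁, a₂ > 0` and `k ∈ ℝ`, any
solution `(ξ₁, ξ₂)` on an interval `I` of the target dynamics `ξ̇₁ = ξ₂`,
`ξ̇₂ = a₁ sin ξ₁ / (1 + k a₂ cos ξ₁)` (denominator nonvanishing on `I`), mapped
through `π(ξ) = (ξ₁, k ξ₁, ξ₂, k ξ₂)` and driven by
`u = k a₁ sin ξ₁ / (1 + k a₂ cos ξ₁)`, solves the cart-pendulum equations
`ẋ₁ = x₃`, `ẋ₂ = x₄`, `ẋ₃ = a₁ sin x₁ - a₂ cos x₁ · u`, `ẋ₄ = u` on `I`. -/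
theorem stmt15 (a₁ a₂ k : ℝ) (ha₁ : 0 < a₁) (ha₂ : 0 < a₂)
    (I : Set ℝ) (hI : I.OrdConnected)
    (ξ₁ ξ₂ : ℝ → ℝ)
    (hden : ∀ t ∈ I, 1 + k * a₂ * Real.cos (ξ₁ t) ≠ 0)
    (hξ₁ : ∀ t ∈ I, HasDerivAt ξ₁ (ξ₂ t) t)
    (hξ₂ : ∀ t ∈ I, HasDerivAt ξ₂
      (a₁ * Real.sin (ξ₁ t) / (1 + k * a₂ * Real.cos (ξ₁ t))) t)
    (x₁ x₂ x₃ x₄ u : ℝ → ℝ)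
    (hx₁ : ∀ t, x₁ t = ξ₁ t) (hx₂ : ∀ t, x₂ t = k * ξ₁ t)
    (hx₃ : ∀ t, x₃ t = ξ₂ t) (hx₄ : ∀ t, x₄ t = k * ξ₂ t)
    (hu : ∀ t, u t = k * a₁ * Real.sin (ξ₁ t) / (1 + k * a₂ * Real.cos (ξ₁ t))) :
    ∀ t ∈ I,
      HasDerivAt x₁ (x₃ t) t ∧
      HasDerivAt x₂ (x₄ t) t ∧
      HasDerivAt x₃ (a₁ * Real.sin (x₁ t) - a₂ * Real.cos (x₁ t) * u t) t ∧
      HasDerivAt x₄ (u t) t := by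
  have ex₁ : x₁ = ξ₁ := funext hx₁
  have ex₂ : x₂ = fun t => k * ξ₁ t := funext hx₂
  have ex₃ : x₃ = ξ₂ := funext hx₃
  have ex₄ : x₄ = fun t => k * ξ₂ t := funext hx₄
  intro t ht
  have hd := hden t ht
  refine ⟨?_, ?_, ?_, ?_⟩
  · rw [ex₁, hx₃]; exact hξ₁ t ht
  · rw [ex₂, hx₄]; exact (hξ₁ t ht).const_mul k
  · rw [ex₃, hx₁, hu]
    have : a₁ * Real.sin (ξ₁ t) -
        a₂ * Real.cos (ξ₁ t) * (k * a₁ * Real.sin (ξ₁ t) / (1 + k * a₂ * Real.cos (ξ₁ t)))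
        = a₁ * Real.sin (ξ₁ t) / (1 + k * a₂ * Real.cos (ξ₁ t)) := by
      rw [eq_div_iff hd, sub_mul, mul_assoc (a₂ * _), div_mul_cancel₀ _ hd]; ring
    rw [this]; exact hξ₂ t ht
  · rw [ex₄, hu]
    have : k * a₁ * Real.sin (ξ₁ t) / (1 + k * a₂ * Real.cos (ξ₁ t))
        = k * (a₁ * Real.sin (ξ₁ t) / (1 + k * a₂ * Real.cos (ξ₁ t))) := by ring
    rw [this]; exact (hξ₂ t ht).const_mul k
end
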